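/- arXiv:2001.02116 — 7 statements merged into one kernel-verified Lean document; each statement's English description precedes it below -/
import Mathlib

section
/- Let A⁻ ≤ A⁺ be d×d Metzler matrices and let 𝒜 = {M Metzler : A⁻ ≤ M ≤ A⁺ entrywise}. Then every matrix in 𝒜 is Hurwitz stable if and only if A⁺ is Hurwitz stable, which in turn is equivalent to the existence of a strictly positive vector v₊ with v₊ᵀA⁺ < 0 componentwise. -/
/-!
If `v > 0` and `vᵀM < 0` for a Metzler `M`, an eigenvector `x` of `M` for an eigenvalue `z`
satisfies `z.re • |x| ≤ M |x|` entrywise (compare with the nonnegative matrix `M + c`), and pairing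
with `v` forces `x = 0` as soon as `z.re ≥ 0`. A certificate for `A⁺` is one for every
Metzler `M ≤ A⁺` as well.

Conversely, write a Hurwitz Metzler `A` as `B - c` with `B ≥ 0`. For `t` large,
`R = (t - B)⁻¹ = ∑ Bᵏ / tᵏ⁺¹ ≥ 0`, and `(c - B)⁻¹ = R ∑ ((t - c) R)ᵏ ≥ 0`: the eigenvalues
`(t - c) / (t - μ)` of `(t - c) R` lie in the open unit disk because `μ.re < c`, so the series
converges by Gelfand's formula. This replaces the Perron–Frobenius theorem. Then
`v = 1ᵀ (-A)⁻¹` is positive and `vᵀA = -1ᵀ`.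
-/

open Matrix

/-- A square real matrix is Metzler if all its off-diagonal entries are nonnegative. -/
def IsMetzler {d : ℕ} (M : Matrix (Fin d) (Fin d) ℝ) : Prop :=
  ∀ i j, i ≠ j → 0 ≤ M i j

/-- A square real matrix is Hurwitz stable if every (complex) eigenvalue has
negative real part. -/
def IsHurwitz {d : ℕ} (M : Matrix (Fin d) (Fin d) ℝ) : Prop :=
  ∀ z ∈ spectrum ℂ (M.map (Complex.ofReal)), z.re < 0

open Filter Topology

section BanachAlgebra

variable {A : Type*} [NormedRing A] [NormedAlgebra ℂ A] [CompleteSpace A] {a : A}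

lemma spectralRadius_lt_one_of_forall_norm_lt_one (h : ∀ z ∈ spectrum ℂ a, ‖z‖ < 1) :
    spectralRadius ℂ a < 1 := by
  rcases (spectrum ℂ a).eq_empty_or_nonempty with hempty | hne
  · simp [spectralRadius, hempty]
  · obtain ⟨z, hz, hρ⟩ := spectrum.exists_nnnorm_eq_spectralRadius_of_nonempty hne
    rw [← hρ, ENNReal.coe_lt_one_iff, ← NNReal.coe_lt_one]
    exact h z hz

lemma summable_pow_of_spectralRadius_lt_one (h : spectralRadius ℂ a < 1) : Summable (a ^ ·) := by
  obtain ⟨r, hρr, hr1⟩ := exists_between h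
  lift r to NNReal using ne_top_of_lt hr1
  have hgelfand := spectrum.pow_nnnorm_pow_one_div_tendsto_nhds_spectralRadius a
  have hbound : ∀ᶠ k in atTop, ‖a ^ k‖ ≤ (r : ℝ) ^ k := by
    filter_upwards [hgelfand.eventually_lt_const hρr, eventually_ge_atTop 1] with k hk hk1
    rw [one_div, ENNReal.rpow_inv_lt_iff (by positivity), ENNReal.rpow_natCast] at hk
    exact_mod_cast hk.le
  exact Summable.of_norm_bounded_eventually_nat
    (summable_geometric_of_lt_one r.2 (by exact_mod_cast hr1)) hbound

end BanachAlgebra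

lemma norm_lt_one_of_mem_spectrum_smul_inverse {A : Type*} [Ring A] [Algebra ℂ A] {b : A}
    {c t : ℝ} (hct : c < t) (hb : ∀ μ ∈ spectrum ℂ b, μ.re < c) {ν : ℂ}
    (hν : ν ∈ spectrum ℂ (((t - c : ℝ) : ℂ) • Ring.inverse (algebraMap ℂ A t - b))) :
    ‖ν‖ < 1 := by
  obtain ⟨u, hu⟩ : IsUnit (algebraMap ℂ A t - b) :=
    spectrum.notMem_iff.1 fun ht => (hb _ ht).not_ge (by simpa using hct.le)
  have hs : ((t - c : ℝ) : ℂ) ≠ 0 := by exact_mod_cast (sub_pos.2 hct).ne'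
  rw [← hu, Ring.inverse_unit, ← Units.smul_mk0 hs, spectrum.unit_smul_eq_smul,
    ← spectrum.map_inv, hu, ← spectrum.singleton_sub_eq] at hν
  obtain ⟨w, hw, rfl⟩ := hν
  dsimp only
  obtain ⟨μ, hμ, hμw⟩ := Set.singleton_sub.subset (Set.mem_inv.1 hw)
  have hdist : t - c < ‖(t : ℂ) - μ‖ :=
    calc t - c < ((t : ℂ) - μ).re := by simp [hb μ hμ]
      _ ≤ _ := Complex.re_le_norm _
  rw [Units.val_mk0, smul_eq_mul, norm_mul, ← inv_inv w, ← hμw, norm_inv,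
    Complex.norm_real, Real.norm_of_nonneg (sub_pos.2 hct).le, ← div_eq_mul_inv,
    div_lt_one (by linarith)]
  exact hdist

namespace Matrix

lemma mul_apply_nonneg {n R : Type*} [Fintype n] [Semiring R] [PartialOrder R] [IsOrderedRing R]
    {M N : Matrix n n R} (hM : ∀ i j, 0 ≤ M i j) (hN : ∀ i j, 0 ≤ N i j) (i j : n) :
    0 ≤ (M * N) i j :=
  Finset.sum_nonneg fun k _ => mul_nonneg (hM i k) (hN k j)

variable {n : Type*} [Fintype n] [DecidableEq n]

lemma inv_one_sub_eq_tsum {R : Type*} [CommRing R] [TopologicalSpace R] [IsTopologicalRing R]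
    [T2Space R] {N : Matrix n n R} (h : Summable (N ^ ·)) : (1 - N)⁻¹ = ∑' k, N ^ k :=
  inv_eq_right_inv h.one_sub_mul_tsum_pow

lemma summable_pow_of_spectrum_map_ofReal {N : Matrix n n ℝ}
    (h : ∀ z ∈ spectrum ℂ (N.map Complex.ofReal), ‖z‖ < 1) : Summable (N ^ ·) := by
  -- Gelfand's formula needs a Banach-algebra norm; this one induces the product topology.
  let _ := @Matrix.linftyOpNormedRing n ℂ _ _ _
  let _ := @Matrix.linftyOpNormedAlgebra ℂ n ℂ _ _ _ _ _
  have hc := (summable_pow_of_spectralRadius_lt_one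
    (spectralRadius_lt_one_of_forall_norm_lt_one h)).map
    Complex.reAddGroupHom.mapMatrix (continuous_id.matrix_map Complex.continuous_re)
  convert hc using 2 with k
  ext i j
  change _ = ((Complex.ofRealHom.mapMatrix N ^ k) i j).re
  rw [← map_pow]
  rfl

lemma inv_one_sub_nonneg {N : Matrix n n ℝ} (hN : ∀ i j, 0 ≤ N i j)
    (h : ∀ z ∈ spectrum ℂ (N.map Complex.ofReal), ‖z‖ < 1) :
    (1 - N) * (1 - N)⁻¹ = 1 ∧ ∀ i j, 0 ≤ (1 - N)⁻¹ i j := by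
  have hsum := summable_pow_of_spectrum_map_ofReal h
  rw [inv_one_sub_eq_tsum hsum]
  refine ⟨hsum.one_sub_mul_tsum_pow, fun i j => ?_⟩
  exact (Pi.hasSum.1 (Pi.hasSum.1 hsum.hasSum i) j).nonneg fun k => pow_apply_nonneg hN k i j

omit [Fintype n] [DecidableEq n] in
lemma map_ofReal_smul (c : ℝ) (N : Matrix n n ℝ) :
    (c • N).map Complex.ofReal = (c : ℂ) • N.map Complex.ofReal := by
  ext i j
  simp

lemma inv_smul_one_sub_nonneg_of_norm_lt {B : Matrix n n ℝ} (hB : ∀ i j, 0 ≤ B i j) {t : ℝ}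
    (ht : 0 < t) (hσ : ∀ μ ∈ spectrum ℂ (B.map Complex.ofReal), ‖μ‖ < t) :
    (t • 1 - B) * (t • 1 - B)⁻¹ = 1 ∧ ∀ i j, 0 ≤ (t • 1 - B)⁻¹ i j := by
  have hdisk : ∀ z ∈ spectrum ℂ ((t⁻¹ • B).map Complex.ofReal), ‖z‖ < 1 := by
    intro z hz
    have ht' : ((t⁻¹ : ℝ) : ℂ) ≠ 0 := by exact_mod_cast (inv_pos.2 ht).ne'
    rw [map_ofReal_smul, ← Units.smul_mk0 ht', spectrum.unit_smul_eq_smul] at hz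
    obtain ⟨μ, hμ, rfl⟩ := hz
    dsimp only
    rw [Units.val_mk0, smul_eq_mul, norm_mul, Complex.norm_real,
      Real.norm_of_nonneg (inv_pos.2 ht).le, inv_mul_lt_one₀ ht]
    exact hσ μ hμ
  obtain ⟨hinv, hnonneg⟩ := inv_one_sub_nonneg (N := t⁻¹ • B)
    (fun i j => mul_nonneg (inv_pos.2 ht).le (hB i j)) hdisk
  have hfactor : t • 1 - B = t • (1 - t⁻¹ • B) := by
    rw [smul_sub, smul_smul, mul_inv_cancel₀ ht.ne', one_smul]
  have hright : (t • 1 - B) * (t⁻¹ • (1 - t⁻¹ • B)⁻¹) = 1 := by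
    rw [hfactor, smul_mul_smul_comm, mul_inv_cancel₀ ht.ne', one_smul, hinv]
  rw [inv_eq_right_inv hright]
  exact ⟨hright, fun i j => mul_nonneg (inv_pos.2 ht).le (hnonneg i j)⟩

lemma inv_smul_one_sub_nonneg {B : Matrix n n ℝ} (hB : ∀ i j, 0 ≤ B i j) {c : ℝ}
    (hσ : ∀ μ ∈ spectrum ℂ (B.map Complex.ofReal), μ.re < c) :
    (c • 1 - B) * (c • 1 - B)⁻¹ = 1 ∧ ∀ i j, 0 ≤ (c • 1 - B)⁻¹ i j := by
  obtain ⟨C, hC⟩ := ((finite_spectrum (B.map Complex.ofReal)).image norm).bddAbove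
  set t := |c| + |C| + 1
  have hct : c < t := by linarith [le_abs_self c, abs_nonneg C]
  have ht : 0 < t := by positivity
  obtain ⟨hR, hR₀⟩ := inv_smul_one_sub_nonneg_of_norm_lt hB ht fun μ hμ =>
    (hC ⟨μ, hμ, rfl⟩).trans_lt (by linarith [le_abs_self C, abs_nonneg c])
  set R := (t • 1 - B)⁻¹
  set P := (t - c) • R
  have hRc : R.map Complex.ofReal = Ring.inverse (algebraMap ℂ _ t - B.map Complex.ofReal) := by
    rw [← nonsing_inv_eq_ringInverse]
    refine (inv_eq_right_inv ?_).symm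
    have hmap : algebraMap ℂ _ (t : ℂ) = Complex.ofRealHom.mapMatrix (t • 1 : Matrix n n ℝ) := by
      ext i j
      by_cases h : i = j <;> simp [h, Algebra.algebraMap_eq_smul_one]
    change (_ - Complex.ofRealHom.mapMatrix B) * Complex.ofRealHom.mapMatrix R = 1
    rw [hmap, ← map_sub, ← map_mul, hR, map_one]
  obtain ⟨hP, hP₀⟩ := inv_one_sub_nonneg (N := P)
    (fun i j => mul_nonneg (sub_pos.2 hct).le (hR₀ i j)) fun ν hν =>
      norm_lt_one_of_mem_spectrum_smul_inverse hct hσ (by rwa [map_ofReal_smul, hRc] at hν)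
  have hright : (c • 1 - B) * (R * (1 - P)⁻¹) = 1 := by
    rw [← mul_assoc, show (c • 1 - B) * R = 1 - P by
      rw [show c • 1 - B = (t • 1 - B) - (t - c) • 1 by rw [sub_smul]; abel, sub_mul, hR,
        smul_one_mul], hP]
  rw [inv_eq_right_inv hright]
  exact ⟨hright, mul_apply_nonneg hR₀ hP₀⟩

lemma exists_pos_vecMul_eq_one {R : Type*} [CommRing R] [LinearOrder R] [IsStrictOrderedRing R]
    {X : Matrix n n R} (hX : X * X⁻¹ = 1) (h : ∀ i j, 0 ≤ X⁻¹ i j) :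
    ∃ v : n → R, (∀ i, 0 < v i) ∧ v ᵥ* X = 1 := by
  refine ⟨1 ᵥ* X⁻¹, fun j => ?_, by rw [vecMul_vecMul, mul_eq_one_comm.1 hX, vecMul_one]⟩
  obtain ⟨k, hk⟩ : ∃ k, X⁻¹ k j ≠ 0 := by
    by_contra! hzero
    simpa [mul_apply, hzero] using congrFun (congrFun hX j) j
  simp only [vecMul, dotProduct, Pi.one_apply, one_mul]
  exact Finset.sum_pos' (fun i _ => h i j) ⟨k, Finset.mem_univ k, (h k j).lt_of_ne' hk⟩

lemma map_ofReal_add_smul_one (M : Matrix n n ℝ) (c : ℝ) :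
    (M + c • 1).map Complex.ofReal = M.map Complex.ofReal + algebraMap ℂ _ c := by
  ext i j
  by_cases h : i = j <;> simp [h, Algebra.algebraMap_eq_smul_one]

lemma exists_mulVec_eq_smul_of_mem_spectrum {K : Type*} [Field K] {M : Matrix n n K} {z : K}
    (hz : z ∈ spectrum K M) : ∃ x ≠ 0, M *ᵥ x = z • x := by
  rw [← spectrum_toLin', ← Module.End.hasEigenvalue_iff_mem_spectrum] at hz
  obtain ⟨x, hx⟩ := hz.exists_hasEigenvector
  exact ⟨x, hx.2, by simpa using hx.apply_eq_smul⟩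

omit [DecidableEq n] in
lemma norm_mul_norm_le_mulVec_norm {B : Matrix n n ℝ} (hB : ∀ i j, 0 ≤ B i j) {x : n → ℂ}
    {w : ℂ} (hx : B.map Complex.ofReal *ᵥ x = w • x) (j : n) :
    ‖w‖ * ‖x j‖ ≤ (B *ᵥ fun i => ‖x i‖) j :=
  calc ‖w‖ * ‖x j‖ = ‖∑ i, (B j i : ℂ) * x i‖ := by
        rw [← norm_mul, ← smul_eq_mul, ← Pi.smul_apply, ← hx]
        rfl
    _ ≤ ∑ i, ‖(B j i : ℂ) * x i‖ := norm_sum_le _ _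
    _ = (B *ᵥ fun i => ‖x i‖) j := by simp [mulVec, dotProduct, abs_of_nonneg (hB j _)]

omit [DecidableEq n] in
lemma eq_zero_of_smul_le_mulVec {M : Matrix n n ℝ} {v a : n → ℝ} (hv : 0 ≤ v)
    (hvM : ∀ j, (v ᵥ* M) j < 0) (ha : 0 ≤ a) {s : ℝ} (hs : 0 ≤ s) (h : s • a ≤ M *ᵥ a) :
    a = 0 := by
  by_contra hne
  obtain ⟨k, hk⟩ := Function.ne_iff.1 hne
  have hneg : (v ᵥ* M) ⬝ᵥ a < 0 :=
    Finset.sum_neg' (fun j _ => mul_nonpos_of_nonpos_of_nonneg (hvM j).le (ha j))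
      ⟨k, Finset.mem_univ k, mul_neg_of_neg_of_pos (hvM k) ((ha k).lt_of_ne' hk)⟩
  have hnonneg : 0 ≤ v ⬝ᵥ (M *ᵥ a) :=
    (dotProduct_nonneg_of_nonneg hv (smul_nonneg hs ha)).trans
      (dotProduct_le_dotProduct_of_nonneg_left h hv)
  rw [dotProduct_mulVec] at hnonneg
  exact hneg.not_ge hnonneg

end Matrix

namespace IsMetzler

variable {d : ℕ} {M : Matrix (Fin d) (Fin d) ℝ}

lemma exists_add_smul_one_nonneg (hM : IsMetzler M) : ∃ c : ℝ, ∀ i j, 0 ≤ (M + c • 1) i j := by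
  refine ⟨∑ k, |M k k|, fun i j => ?_⟩
  rcases eq_or_ne i j with rfl | hij
  · have := Finset.single_le_sum (fun k _ => abs_nonneg (M k k)) (Finset.mem_univ i)
    simp only [Matrix.add_apply, Matrix.smul_apply, one_apply_eq, smul_eq_mul, mul_one]
    linarith [neg_abs_le (M i i)]
  · simpa [one_apply_ne hij] using hM i j hij

lemma re_smul_le_mulVec_norm (hM : IsMetzler M) {x : Fin d → ℂ} {z : ℂ}
    (hx : M.map Complex.ofReal *ᵥ x = z • x) :
    z.re • (fun i => ‖x i‖) ≤ M *ᵥ fun i => ‖x i‖ := by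
  obtain ⟨c, hB⟩ := hM.exists_add_smul_one_nonneg
  have hxB : (M + c • 1).map Complex.ofReal *ᵥ x = (z + c) • x := by
    rw [map_ofReal_add_smul_one, add_mulVec, hx, Algebra.algebraMap_eq_smul_one, smul_mulVec,
      one_mulVec, add_smul]
  intro j
  have hbound := norm_mul_norm_le_mulVec_norm hB hxB j
  have hre : z.re + c ≤ ‖z + c‖ := by simpa using Complex.re_le_norm (z + c)
  simp only [add_mulVec, smul_mulVec, one_mulVec, Pi.add_apply, Pi.smul_apply, smul_eq_mul]
    at hbound ⊢
  nlinarith [norm_nonneg (x j)]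

lemma isHurwitz_of_vecMul_neg (hM : IsMetzler M) {v : Fin d → ℝ} (hv : 0 ≤ v)
    (hvM : ∀ j, (v ᵥ* M) j < 0) : IsHurwitz M := by
  intro z hz
  by_contra! hre
  obtain ⟨x, hx0, hx⟩ := exists_mulVec_eq_smul_of_mem_spectrum hz
  have hnorm := eq_zero_of_smul_le_mulVec hv hvM (fun i => norm_nonneg (x i)) hre
    (hM.re_smul_le_mulVec_norm hx)
  exact hx0 (funext fun i => norm_eq_zero.1 (congrFun hnorm i))

lemma exists_pos_vecMul_neg (hM : IsMetzler M) (hH : IsHurwitz M) :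
    ∃ v : Fin d → ℝ, (∀ i, 0 < v i) ∧ ∀ j, (v ᵥ* M) j < 0 := by
  obtain ⟨c, hB⟩ := hM.exists_add_smul_one_nonneg
  have hσ : ∀ μ ∈ spectrum ℂ ((M + c • 1).map Complex.ofReal), μ.re < c := by
    intro μ hμ
    rw [map_ofReal_add_smul_one, ← spectrum.add_singleton_eq] at hμ
    obtain ⟨z, hz, _, rfl, rfl⟩ := hμ
    simpa using hH z hz
  obtain ⟨hX, hX₀⟩ := inv_smul_one_sub_nonneg hB hσ
  rw [show c • 1 - (M + c • 1) = -M by abel] at hX hX₀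
  obtain ⟨v, hv, hvM⟩ := exists_pos_vecMul_eq_one hX hX₀
  refine ⟨v, hv, fun j => ?_⟩
  have := congrFun hvM j
  simp only [vecMul_neg, Pi.neg_apply, Pi.one_apply] at this
  linarith

end IsMetzler

theorem interval_hurwitz_iff_upper_bound_general {d : ℕ}
    (Am Ap : Matrix (Fin d) (Fin d) ℝ)
    (hAp : IsMetzler Ap) (hle : ∀ i j, Am i j ≤ Ap i j) :
    ((∀ M : Matrix (Fin d) (Fin d) ℝ, IsMetzler M → (∀ i j, Am i j ≤ M i j) → (∀ i j, M i j ≤ Ap i j) → IsHurwitz M)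
      ↔ IsHurwitz Ap)
    ∧ (IsHurwitz Ap ↔ ∃ v : Fin d → ℝ, (∀ i, 0 < v i) ∧ ∀ j, (v ᵥ* Ap) j < 0) := by
  have certificate : IsHurwitz Ap ↔ ∃ v : Fin d → ℝ, (∀ i, 0 < v i) ∧ ∀ j, (v ᵥ* Ap) j < 0 :=
    ⟨hAp.exists_pos_vecMul_neg, fun ⟨v, hv, hvAp⟩ =>
      hAp.isHurwitz_of_vecMul_neg (fun i => (hv i).le) hvAp⟩
  refine ⟨⟨fun h => h Ap hAp hle fun _ _ => le_rfl, fun hH M hM _ hMAp => ?_⟩, certificate⟩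
  obtain ⟨v, hv, hvAp⟩ := certificate.1 hH
  refine hM.isHurwitz_of_vecMul_neg (fun i => (hv i).le) fun j => lt_of_le_of_lt ?_ (hvAp j)
  exact dotProduct_le_dotProduct_of_nonneg_left (fun i => hMAp i j) fun i => (hv i).le

theorem interval_hurwitz_iff_upper_bound {d : ℕ}
    (Am Ap : Matrix (Fin d) (Fin d) ℝ)
    (hAm : IsMetzler Am) (hAp : IsMetzler Ap) (hle : ∀ i j, Am i j ≤ Ap i j) :
    ((∀ M : Matrix (Fin d) (Fin d) ℝ, IsMetzler M → (∀ i j, Am i j ≤ M i j) → (∀ i j, M i j ≤ Ap i j) → IsHurwitz M)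
      ↔ IsHurwitz Ap)
    ∧ (IsHurwitz Ap ↔ ∃ v : Fin d → ℝ, (∀ i, 0 < v i) ∧ ∀ j, (v ᵥ* Ap) j < 0) :=
  interval_hurwitz_iff_upper_bound_general Am Ap hAp hle
end

section
/- Let M be a d×d Metzler matrix, b = e_i, c = e_j standard basis vectors with i ≠ j. Then the row vector [cᵀb, cᵀMb, …, cᵀM^{d−1}b] is nonzero if and only if there is a directed path from node i to node j in the directed graph on vertices {1,…,d} with an edge from m to n (m ≠ n) whenever M_{nm} ≠ 0. -/
open Matrix

/-! A nonzero `(j, i)` entry of `M ^ k` expands into a walk from `i` to `j` along nonzero entries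
of `M`, whatever their signs. Conversely, since `M` is Metzler, `N = M + c • 1` is entrywise
nonnegative for large `c` and has the same off-diagonal support as `M`, so along a path from `i`
to `j` nothing can cancel and some `(N ^ k) j i` is positive. But `N ^ k` is a polynomial in `M`,
and by Cayley–Hamilton every polynomial in `M` is a combination of `M ^ 0, …, M ^ (d - 1)`, so
one of these has a nonzero `(j, i)` entry. -/

open Polynomial Relation

theorem Relation.ReflTransGen.ne_and {α : Type*} {r : α → α → Prop} {a b : α}
    (h : ReflTransGen r a b) : ReflTransGen (fun x y => x ≠ y ∧ r x y) a b := by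
  induction h with
  | refl => exact .refl
  | @tail b c _ hbc ih =>
    by_cases hb : b = c
    · exact hb ▸ ih
    · exact ih.tail ⟨hb, hbc⟩

namespace Matrix

variable {n R : Type*} [Fintype n] [DecidableEq n]

theorem exists_pow_apply_ne_zero_of_aeval_apply_ne_zero [CommRing R] [Nontrivial R]
    (A : Matrix n n R) (p : R[X]) {a b : n} (h : aeval A p a b ≠ 0) :
    ∃ k < Fintype.card n, (A ^ k) a b ≠ 0 := by
  by_contra! hzero
  have : Nonempty n := ⟨a⟩
  have hdeg : (p %ₘ A.charpoly).natDegree < Fintype.card n := by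
    rw [← A.charpoly_natDegree_eq_dim]
    refine natDegree_modByMonic_lt p A.charpoly_monic fun h1 => ?_
    exact (Fintype.card_ne_zero (α := n)) (by simpa [h1] using A.charpoly_natDegree_eq_dim.symm)
  apply h
  rw [aeval_eq_aeval_mod_charpoly, aeval_eq_sum_range' hdeg, sum_apply]
  exact Finset.sum_eq_zero fun k hk => by
    rw [smul_apply, hzero k (Finset.mem_range.mp hk), smul_zero]

theorem reflTransGen_of_pow_apply_ne_zero [Semiring R] (A : Matrix n n R) {k : ℕ} {a b : n}
    (h : (A ^ k) b a ≠ 0) : ReflTransGen (fun m n => A n m ≠ 0) a b := by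
  induction k generalizing b with
  | zero =>
    obtain rfl : b = a := by
      by_contra hba
      exact h (one_apply_ne hba)
    exact .refl
  | succ k ih =>
    rw [pow_succ', mul_apply] at h
    obtain ⟨l, -, hl⟩ := Finset.exists_ne_zero_of_sum_ne_zero h
    exact (ih (right_ne_zero_of_mul hl)).tail (left_ne_zero_of_mul hl)

theorem exists_pow_apply_pos_of_reflTransGen [Semiring R] [PartialOrder R]
    [IsStrictOrderedRing R] {A : Matrix n n R} (hA : ∀ i j, 0 ≤ A i j) {a b : n}
    (h : ReflTransGen (fun m n => 0 < A n m) a b) : ∃ k, 0 < (A ^ k) b a := by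
  induction h with
  | refl => exact ⟨0, by simp⟩
  | @tail b c _ hbc ih =>
    obtain ⟨k, hk⟩ := ih
    refine ⟨k + 1, ?_⟩
    rw [pow_succ', mul_apply]
    exact Finset.sum_pos' (fun l _ => mul_nonneg (hA c l) (pow_apply_nonneg hA k l a))
      ⟨b, Finset.mem_univ b, mul_pos hbc hk⟩

end Matrix

theorem IsMetzler.exists_nonneg_add_smul_one {d : ℕ} {M : Matrix (Fin d) (Fin d) ℝ}
    (hM : IsMetzler M) : ∃ c : ℝ, ∀ m n, 0 ≤ (M + c • 1) m n := by
  refine ⟨∑ l, |M l l|, fun m n => ?_⟩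
  rcases eq_or_ne m n with rfl | hmn
  · have hle : |M m m| ≤ ∑ l, |M l l| :=
      Finset.single_le_sum (fun l _ => abs_nonneg (M l l)) (Finset.mem_univ m)
    simp only [Matrix.add_apply, Matrix.smul_apply, one_apply_eq, smul_eq_mul, mul_one]
    linarith [neg_abs_le (M m m)]
  · simpa [one_apply_ne hmn] using hM m n hmn

theorem output_controllability_iff_path_general {d : ℕ}
    (M : Matrix (Fin d) (Fin d) ℝ) (hM : IsMetzler M)
    (i j : Fin d) :
    (∃ k < d, (Pi.single j (1 : ℝ) ᵥ* (M ^ k)) ⬝ᵥ Pi.single i (1 : ℝ) ≠ 0) ↔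
      Relation.ReflTransGen (fun m n : Fin d => m ≠ n ∧ M n m ≠ 0) i j := by
  simp only [single_vecMul, one_smul, dotProduct_single, mul_one]
  constructor
  · rintro ⟨k, -, hk⟩
    exact (reflTransGen_of_pow_apply_ne_zero M hk).ne_and
  · intro hpath
    obtain ⟨c, hN⟩ := hM.exists_nonneg_add_smul_one
    have hNpath : ReflTransGen (fun m n => 0 < (M + c • 1) n m) i j :=
      ReflTransGen.mono (fun m n ⟨hmn, hMnm⟩ => by
        simpa [one_apply_ne hmn.symm] using (hM n m hmn.symm).lt_of_ne' hMnm) i j hpath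
    obtain ⟨k, hk⟩ := exists_pow_apply_pos_of_reflTransGen hN hNpath
    have hshift : (M + c • 1) ^ k = aeval M ((X + C c) ^ k) := by
      simp [Algebra.algebraMap_eq_smul_one]
    simpa using exists_pow_apply_ne_zero_of_aeval_apply_ne_zero M _ (hshift ▸ hk.ne')

theorem output_controllability_iff_path {d : ℕ}
    (M : Matrix (Fin d) (Fin d) ℝ) (hM : IsMetzler M)
    (i j : Fin d) (hij : i ≠ j) :
    (∃ k < d, (Pi.single j (1 : ℝ) ᵥ* (M ^ k)) ⬝ᵥ Pi.single i (1 : ℝ) ≠ 0) ↔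
      Relation.ReflTransGen (fun m n : Fin d => m ≠ n ∧ M n m ≠ 0) i j :=
  output_controllability_iff_path_general M hM i j
end

section
/- Let A⁻ ≤ A⁺ be d×d Metzler matrices and fix indices i, j. Suppose there exist a nonnegative vector w₋ ∈ ℝ^d and a scalar μ₋ ≥ 0 such that w₋ᵀe_i > 0, w₋ᵀ(A⁻ − μ₋I) + e_jᵀ = 0, and A⁻ − μ₋I is Hurwitz stable. Then for every Metzler matrix A with A⁻ ≤ A ≤ A⁺ there exist a nonnegative vector w and a scalar μ ≥ 0 with wᵀe_i > 0 and wᵀ(A − μI) + e_jᵀ = 0. -/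
/-!
For the lower bound, `N = A⁻ - μ₋ I` is invertible (Hurwitz) and `w₋ = -e_jᵀ N⁻¹`. By
Cayley–Hamilton `N⁻¹` is a polynomial in the nonnegative matrix `A⁻ + c I`, so `w₋ i ≠ 0` forces
`((A⁻ + c I) ^ m) j i > 0` for some `m`: `i` is reachable from `j` in the graph of `A⁻`, hence in
the graph of every `A ≥ A⁻`.

For such a Metzler `A`, take `μ` above every column sum of `A`. A minimum principle shows that
`μ I - A` is invertible with `w = e_jᵀ (μ I - A)⁻¹ ≥ 0`, and the identity
`(μ + c) w = w (A + c I) + e_j` propagates positivity of `w` along the paths from `j`, so `w i > 0`.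
-/

open Matrix

open Polynomial

namespace Matrix

variable {n : Type*} [Fintype n] [DecidableEq n]

theorem nonsing_inv_mem_adjoin {K : Type*} [Field K] (N : Matrix n n K) :
    N⁻¹ ∈ Algebra.adjoin K {N} := by
  by_cases hN : IsUnit N.det
  · set p := N.charpoly
    have hp0 : p.coeff 0 ≠ 0 := fun h ↦ hN.ne_zero (by rw [det_eq_sign_charpoly_coeff, h, mul_zero])
    -- Cayley–Hamilton with `p = X * p.divX + p(0)`
    have hCH : aeval N p.divX * N = -(p.coeff 0 • 1) := by
      have h : aeval N p = 0 := N.aeval_self_charpoly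
      rw [← p.divX_mul_X_add, map_add, map_mul, aeval_X, aeval_C,
        Algebra.algebraMap_eq_smul_one] at h
      exact eq_neg_of_add_eq_zero_left h
    have hq : aeval N p.divX = -(p.coeff 0 • N⁻¹) := by
      rw [← mul_nonsing_inv_cancel_right N (aeval N p.divX) hN, hCH, neg_mul, smul_mul_assoc,
        one_mul]
    have hinv : N⁻¹ = -(p.coeff 0)⁻¹ • aeval N p.divX := by
      rw [hq, neg_smul, smul_neg, neg_neg, smul_smul, inv_mul_cancel₀ hp0, one_smul]
    rw [hinv]
    exact Subalgebra.smul_mem _ (aeval_mem_adjoin_singleton K N) _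
  · rw [nonsing_inv_apply_not_isUnit N hN]
    exact Subalgebra.zero_mem _

theorem apply_eq_zero_of_mem_adjoin {R : Type*} [CommSemiring R] {B P : Matrix n n R} {a b : n}
    (h : ∀ m, (B ^ m) a b = 0) (hP : P ∈ Algebra.adjoin R {B}) : P a b = 0 := by
  rw [Algebra.adjoin_singleton_eq_range_aeval] at hP
  obtain ⟨p, rfl⟩ := hP
  simp [aeval_eq_sum_range, sum_apply, h]

theorem exists_pow_apply_ne_zero_of_vecMul_eq_single {K : Type*} [Field K] {N B : Matrix n n K}
    (hN : IsUnit N.det) (hNB : N ∈ Algebra.adjoin K {B}) {w : n → K} {a b : n}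
    (hw : w ᵥ* N = Pi.single a 1) (hwb : w b ≠ 0) : ∃ m, (B ^ m) a b ≠ 0 := by
  have hw' : w = Pi.single a 1 ᵥ* N⁻¹ := by
    rw [← hw, vecMul_vecMul, mul_nonsing_inv N hN, vecMul_one]
  by_contra! hB
  refine hwb (?_ : w b = 0)
  rw [hw', single_one_vecMul]
  exact apply_eq_zero_of_mem_adjoin hB
    (Algebra.adjoin_le (Set.singleton_subset_iff.2 hNB) (nonsing_inv_mem_adjoin N))

variable {R : Type*} [CommSemiring R] [PartialOrder R] [IsOrderedRing R]

theorem pow_apply_le_pow_apply {B C : Matrix n n R} (hB : ∀ k l, 0 ≤ B k l)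
    (hBC : ∀ k l, B k l ≤ C k l) (m : ℕ) (k l : n) : (B ^ m) k l ≤ (C ^ m) k l := by
  induction m generalizing l with
  | zero => rfl
  | succ m ih =>
    rw [pow_succ, pow_succ, mul_apply, mul_apply]
    exact Finset.sum_le_sum fun p _ ↦ mul_le_mul (ih p) (hBC p l) (hB p l)
      ((pow_apply_nonneg hB m k p).trans (ih p))

/-- Positivity of `w` spreads along the edges of `B`, since `λ w = w B + eₐ` with nonnegative
terms on the right. -/
theorem pos_of_pow_apply_pos {B : Matrix n n ℝ} (hB : ∀ k l, 0 ≤ B k l) {w : n → ℝ}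
    (hw : ∀ k, 0 ≤ w k) {lam : ℝ} {a : n} (h : w ᵥ* (lam • 1 - B) = Pi.single a 1) :
    ∀ m k, 0 < (B ^ m) a k → 0 < w k := by
  have hfix : ∀ k, lam * w k = (w ᵥ* B) k + (Pi.single a (1 : ℝ) : n → ℝ) k := fun k ↦ by
    have hk := congrFun h k
    rw [vecMul_sub, vecMul_smul, vecMul_one] at hk
    simp only [Pi.sub_apply, Pi.smul_apply, smul_eq_mul] at hk
    linarith
  have hterm : ∀ k l, w l * B l k ≤ (w ᵥ* B) k := fun k l ↦
    Finset.single_le_sum (f := fun l ↦ w l * B l k) (fun l _ ↦ mul_nonneg (hw l) (hB l k))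
      (Finset.mem_univ l)
  have hvec : ∀ k, 0 ≤ (w ᵥ* B) k := fun k ↦
    Finset.sum_nonneg fun l _ ↦ mul_nonneg (hw l) (hB l k)
  have hsingle : ∀ k, (0 : ℝ) ≤ (Pi.single a (1 : ℝ) : n → ℝ) k :=
    show (0 : n → ℝ) ≤ Pi.single a 1 from Pi.single_nonneg.2 zero_le_one
  have of_lam_mul : ∀ k, 0 < lam * w k → 0 < w k := fun k hk ↦
    (hw k).lt_of_ne fun h0 ↦ by rw [← h0, mul_zero] at hk; exact hk.false
  intro m
  induction m with
  | zero =>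
    intro k hk
    rw [pow_zero, one_apply] at hk
    split_ifs at hk with hak
    · subst hak
      apply of_lam_mul
      rw [hfix, Pi.single_eq_same]
      linarith [hvec a]
    · exact absurd hk (lt_irrefl 0)
  | succ m ih =>
    intro k hk
    rw [pow_succ, mul_apply] at hk
    obtain ⟨l, -, hl⟩ := Finset.exists_lt_of_sum_lt (f := fun _ ↦ (0 : ℝ))
      (by simpa using hk)
    have hpath : 0 < (B ^ m) a l ∧ 0 < B l k :=
      (pos_and_pos_or_neg_and_neg_of_mul_pos hl).resolve_right
        fun h ↦ (h.2.not_ge (hB l k)).elim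
    apply of_lam_mul
    rw [hfix]
    linarith [hterm k l, mul_pos (ih l hpath.1) hpath.2, hsingle k]

end Matrix

open Matrix

theorem IsHurwitz.isUnit_det {d : ℕ} {N : Matrix (Fin d) (Fin d) ℝ} (hN : IsHurwitz N) :
    IsUnit N.det := by
  have hunit : IsUnit (N.map Complex.ofReal) := by
    by_contra h
    simpa using hN 0 ((spectrum.zero_mem_iff ℂ).2 h)
  rw [isUnit_iff_isUnit_det, show N.map Complex.ofReal = Complex.ofRealHom.mapMatrix N from rfl,
    ← RingHom.map_det, isUnit_iff_ne_zero] at hunit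
  exact isUnit_iff_ne_zero.2 (by simpa using hunit)

namespace IsMetzler

variable {d : ℕ} {A : Matrix (Fin d) (Fin d) ℝ}

theorem exists_add_smul_one_nonneg_s8 (hA : IsMetzler A) : ∃ c : ℝ, ∀ k l, 0 ≤ (A + c • 1) k l := by
  obtain ⟨c, hc⟩ := Finite.exists_le fun k ↦ -A k k
  refine ⟨c, fun k l ↦ ?_⟩
  rcases eq_or_ne k l with rfl | hkl
  · simp only [Matrix.add_apply, Matrix.smul_apply, one_apply_eq, smul_eq_mul, mul_one]
    linarith [hc k]
  · simpa [one_apply_ne hkl] using hA k l hkl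

/-- Minimum principle: `μ - A` is a Z-matrix with positive column sums. -/
theorem nonneg_of_vecMul_smul_one_sub_nonneg (hA : IsMetzler A) {μ : ℝ}
    (hμ : ∀ k, ∑ l, A l k < μ) {w : Fin d → ℝ} (hw : ∀ k, 0 ≤ (w ᵥ* (μ • 1 - A)) k) :
    ∀ k, 0 ≤ w k := by
  by_contra! ⟨k₀, hk₀⟩
  have : Nonempty (Fin d) := ⟨k₀⟩
  obtain ⟨k, hk⟩ := Finite.exists_min w
  have hwk : w k < 0 := (hk k₀).trans_lt hk₀
  have hlow : w k * ∑ l, A l k ≤ ∑ l, w l * A l k := by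
    rw [Finset.mul_sum]
    refine Finset.sum_le_sum fun l _ ↦ ?_
    rcases eq_or_ne l k with rfl | hlk
    · rfl
    · exact mul_le_mul_of_nonneg_right (hk l) (hA l k hlk)
  have hval : (w ᵥ* (μ • 1 - A)) k = μ * w k - ∑ l, w l * A l k := by
    rw [vecMul_sub, vecMul_smul, vecMul_one]
    simp [vecMul, dotProduct]
  nlinarith [hw k, mul_pos_of_neg_of_neg hwk (sub_neg.2 (hμ k))]

theorem isUnit_det_smul_one_sub (hA : IsMetzler A) {μ : ℝ} (hμ : ∀ k, ∑ l, A l k < μ) :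
    IsUnit (μ • 1 - A).det := by
  rw [isUnit_iff_ne_zero]
  intro h
  obtain ⟨v, hv, hvM⟩ := exists_vecMul_eq_zero_iff.2 h
  refine hv (funext fun k ↦ le_antisymm ?_ ?_)
  · have := hA.nonneg_of_vecMul_smul_one_sub_nonneg hμ (w := -v) (by simp [neg_vecMul, hvM]) k
    simpa using this
  · exact hA.nonneg_of_vecMul_smul_one_sub_nonneg hμ (by simp [hvM]) k

theorem exists_nonneg_vecMul_smul_one_sub_eq (hA : IsMetzler A) {μ : ℝ}
    (hμ : ∀ k, ∑ l, A l k < μ) {b : Fin d → ℝ} (hb : ∀ k, 0 ≤ b k) :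
    ∃ w : Fin d → ℝ, (∀ k, 0 ≤ w k) ∧ w ᵥ* (μ • 1 - A) = b := by
  have hw : (b ᵥ* (μ • 1 - A)⁻¹) ᵥ* (μ • 1 - A) = b := by
    rw [vecMul_vecMul, nonsing_inv_mul _ (hA.isUnit_det_smul_one_sub hμ), vecMul_one]
  exact ⟨_, hA.nonneg_of_vecMul_smul_one_sub_nonneg hμ fun k ↦ by rw [hw]; exact hb k, hw⟩

end IsMetzler

theorem interval_output_controllability_general {d : ℕ}
    (Am Ap : Matrix (Fin d) (Fin d) ℝ) (i j : Fin d)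
    (hAm : IsMetzler Am)
    (wm : Fin d → ℝ) (μm : ℝ)
    (hwi : 0 < wm ⬝ᵥ Pi.single i (1 : ℝ))
    (heq : wm ᵥ* (Am - μm • (1 : Matrix (Fin d) (Fin d) ℝ)) + Pi.single j (1 : ℝ) = 0)
    (hH : IsHurwitz (Am - μm • (1 : Matrix (Fin d) (Fin d) ℝ))) :
    ∀ A : Matrix (Fin d) (Fin d) ℝ, IsMetzler A → (∀ m n, Am m n ≤ A m n) → (∀ m n, A m n ≤ Ap m n) →
      ∃ (w : Fin d → ℝ) (μ : ℝ), (∀ k, 0 ≤ w k) ∧ 0 ≤ μ ∧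
        0 < w ⬝ᵥ Pi.single i (1 : ℝ) ∧
        w ᵥ* (A - μ • (1 : Matrix (Fin d) (Fin d) ℝ)) + Pi.single j (1 : ℝ) = 0 := by
  intro A hA hAmA _
  obtain ⟨c, hc⟩ := hAm.exists_add_smul_one_nonneg_s8
  have hcA : ∀ k l, (Am + c • 1) k l ≤ (A + c • 1) k l := fun k l ↦ by simpa using hAmA k l
  obtain ⟨m, hm⟩ : ∃ m, ((Am + c • (1 : Matrix (Fin d) (Fin d) ℝ)) ^ m) j i ≠ 0 := by
    refine exists_pow_apply_ne_zero_of_vecMul_eq_single hH.isUnit_det ?_ (w := -wm) ?_ ?_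
    · rw [show Am - μm • 1 = (Am + c • 1) - (c + μm) • 1 by module]
      exact sub_mem (Algebra.self_mem_adjoin_singleton ℝ _)
        (Subalgebra.smul_mem _ (Subalgebra.one_mem _) _)
    · rw [neg_vecMul, eq_neg_of_add_eq_zero_left heq, neg_neg]
    · simpa using hwi.ne'
  have hpath : 0 < ((A + c • 1) ^ m) j i :=
    ((pow_apply_nonneg hc m j i).lt_of_ne' hm).trans_le (pow_apply_le_pow_apply hc hcA m j i)
  obtain ⟨M, hM⟩ := Finite.exists_le fun k ↦ ∑ l, A l k
  set μ := max M 0 + 1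
  have hμ : ∀ k, ∑ l, A l k < μ := fun k ↦ by linarith [hM k, le_max_left M 0]
  obtain ⟨w, hw0, hw⟩ := hA.exists_nonneg_vecMul_smul_one_sub_eq hμ
    (show (0 : Fin d → ℝ) ≤ Pi.single j 1 from Pi.single_nonneg.2 zero_le_one)
  refine ⟨w, μ, hw0, by positivity, ?_, by rw [← neg_sub, vecMul_neg, hw, neg_add_cancel]⟩
  rw [dotProduct_single, mul_one]
  refine pos_of_pow_apply_pos (fun k l ↦ (hc k l).trans (hcA k l)) hw0 (lam := μ + c) ?_ m i hpath
  rwa [show (μ + c) • 1 - (A + c • 1) = μ • 1 - A by module]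

theorem interval_output_controllability {d : ℕ}
    (Am Ap : Matrix (Fin d) (Fin d) ℝ) (i j : Fin d)
    (hAm : IsMetzler Am) (hAp : IsMetzler Ap) (hle : ∀ i j, Am i j ≤ Ap i j)
    (wm : Fin d → ℝ) (μm : ℝ)
    (hwm : ∀ k, 0 ≤ wm k) (hμm : 0 ≤ μm)
    (hwi : 0 < wm ⬝ᵥ Pi.single i (1 : ℝ))
    (heq : wm ᵥ* (Am - μm • (1 : Matrix (Fin d) (Fin d) ℝ)) + Pi.single j (1 : ℝ) = 0)
    (hH : IsHurwitz (Am - μm • (1 : Matrix (Fin d) (Fin d) ℝ))) :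
    ∀ A : Matrix (Fin d) (Fin d) ℝ, IsMetzler A → (∀ m n, Am m n ≤ A m n) → (∀ m n, A m n ≤ Ap m n) →
      ∃ (w : Fin d → ℝ) (μ : ℝ), (∀ k, 0 ≤ w k) ∧ 0 ≤ μ ∧
        0 < w ⬝ᵥ Pi.single i (1 : ℝ) ∧
        w ᵥ* (A - μ • (1 : Matrix (Fin d) (Fin d) ℝ)) + Pi.single j (1 : ℝ) = 0 :=
  interval_output_controllability_general Am Ap i j hAm wm μm hwi heq hH
end

section
/- Let Θ ⊂ ℝ^N be compact and connected and let M : Θ → ℝ^{d×d} be a continuous matrix-valued function such that M(θ) is Metzler for all θ ∈ Θ. Then M(θ) is Hurwitz stable for all θ ∈ Θ if and only if (i) there exists θ* ∈ Θ with M(θ*) Hurwitz stable, and (ii) (−1)^d det(M(θ)) > 0 for all θ ∈ Θ. -/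
/-!
Shifting a Metzler matrix `A` by a multiple of the identity makes it entrywise nonnegative, so
Perron–Frobenius (Collatz–Wielandt maximisation for positive matrices, then a perturbation)
gives, for every complex eigenvalue `z` of `A`, a real eigenvalue `t ≥ Re z`. Hence a Metzler
matrix that is not Hurwitz has a real eigenvalue `t ≥ 0`, and `t > 0` when `det A ≠ 0`. The
characteristic polynomial `χ` of a Hurwitz matrix satisfies `t ^ d ≤ |χ t|` for `t ≥ 0`, so no
Hurwitz matrix lies near one with `χ t = 0`; as the Hurwitz matrices also form an open set (upper
semicontinuity of the spectrum), Hurwitz stability is locally constant along `Θ` as long as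
`det M(θ)` does not vanish, and connectedness of `Θ` propagates it from `θ*`. Conversely `χ` has
no root in `[0, ∞)` for a Hurwitz matrix, so `(-1) ^ d * det A = χ 0 > 0`.
-/

open Matrix

open Filter Topology Polynomial

namespace Polynomial

theorem Monic.eval_pos_of_forall_ne_zero {p : ℝ[X]} (hp : p.Monic) {a : ℝ}
    (h : ∀ t, a ≤ t → p.eval t ≠ 0) {t : ℝ} (ht : a ≤ t) : 0 < p.eval t := by
  have hpos : ∀ᶠ b in atTop, 0 < p.eval b := by
    rcases Nat.eq_zero_or_pos p.natDegree with hdeg | hdeg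
    · simp [hp.natDegree_eq_zero.1 hdeg]
    · exact (p.tendsto_atTop_of_leadingCoeff_nonneg (natDegree_pos_iff_degree_pos.1 hdeg)
        (by simp [hp.leadingCoeff])).eventually_gt_atTop 0
  obtain ⟨b, hb, htb⟩ := (hpos.and (eventually_ge_atTop t)).exists
  by_contra! hneg
  obtain ⟨c, hc, hc0⟩ := intermediate_value_Icc htb p.continuous.continuousOn ⟨hneg, hb.le⟩
  exact h c (ht.trans hc.1) hc0

theorem Monic.pow_natDegree_le_abs_eval {p : ℝ[X]} (hp : p.Monic)
    (h : ∀ z ∈ p.aroots ℂ, z.re ≤ 0) {t : ℝ} (ht : 0 ≤ t) : t ^ p.natDegree ≤ |p.eval t| := by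
  calc t ^ p.natDegree = ((p.aroots ℂ).map fun _ => t).prod := by
        simp [IsAlgClosed.card_aroots_eq_natDegree]
    _ ≤ ((p.aroots ℂ).map fun z => ‖(t : ℂ) - z‖).prod :=
        Multiset.prod_map_le_prod_map₀ _ _ (fun _ _ => ht) fun z hz => by
          simpa using (Complex.re_le_norm ((t : ℂ) - z)).trans' (by simpa using h z hz)
    _ = ‖aeval (t : ℂ) p‖ := by
        rw [(IsAlgClosed.splits _).aeval_eq_prod_aroots_of_monic hp]
        change _ = normHom (α := ℂ) _
        rw [map_multiset_prod, Multiset.map_map]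
        rfl
    _ = |p.eval t| := by
        rw [← Complex.coe_algebraMap, aeval_algebraMap_apply_eq_algebraMap_eval,
          Complex.coe_algebraMap, Complex.norm_real, Real.norm_eq_abs]

end Polynomial

namespace Matrix

variable {n : Type*} [Fintype n]

theorem mem_spectrum_iff_exists_mulVec_eq_smul [DecidableEq n] {K : Type*} [Field K]
    {M : Matrix n n K} {μ : K} :
    μ ∈ spectrum K M ↔ ∃ v ≠ 0, M *ᵥ v = μ • v := by
  rw [← spectrum_toLin', ← Module.End.hasEigenvalue_iff_mem_spectrum,
    Module.End.hasEigenvalue_iff, Submodule.ne_bot_iff]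
  simp [and_comm]

theorem continuous_eval_charpoly [DecidableEq n] {R : Type*} [CommRing R] [TopologicalSpace R]
    [IsTopologicalRing R] :
    Continuous fun p : Matrix n n R × R => p.1.charpoly.eval p.2 := by
  simp only [eval_charpoly, scalar_apply]
  fun_prop

theorem mem_spectrum_map_ofReal_iff [DecidableEq n] {A : Matrix n n ℝ} {z : ℂ} :
    z ∈ spectrum ℂ (A.map Complex.ofReal) ↔ z ∈ A.charpoly.aroots ℂ := by
  rw [← Complex.coe_algebraMap, mem_spectrum_iff_isRoot_charpoly, charpoly_map,
    mem_roots (A.charpoly_monic.map _).ne_zero]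

variable {C : Matrix n n ℝ} {x : n → ℝ} {s : ℝ}

theorem le_sum_sum_of_smul_le_mulVec (hC : ∀ i j, 0 ≤ C i j) (hx : 0 ≤ x)
    (hx1 : ∑ i, x i = 1) (h : s • x ≤ C *ᵥ x) : s ≤ ∑ i, ∑ j, C i j := by
  have hx_le_one (j : n) : x j ≤ 1 :=
    hx1 ▸ Finset.single_le_sum (fun k _ => hx k) (Finset.mem_univ j)
  calc s = ∑ i, s * x i := by rw [← Finset.mul_sum, hx1, mul_one]
    _ ≤ ∑ i, ∑ j, C i j * x j := Finset.sum_le_sum fun i _ => h i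
    _ ≤ ∑ i, ∑ j, C i j := Finset.sum_le_sum fun i _ => Finset.sum_le_sum fun j _ =>
        mul_le_of_le_one_right (hC i j) (hx_le_one j)

theorem exists_sum_eq_one_of_smul_le_mulVec (hx : 0 ≤ x) (hx0 : x ≠ 0) (h : s • x ≤ C *ᵥ x) :
    ∃ y, 0 ≤ y ∧ ∑ i, y i = 1 ∧ s • y ≤ C *ᵥ y := by
  have hsum : 0 < ∑ i, x i := by
    obtain ⟨j, hj⟩ := Function.ne_iff.mp hx0
    exact Finset.sum_pos' (fun i _ => hx i) ⟨j, Finset.mem_univ j, (hx j).lt_of_ne' hj⟩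
  refine ⟨(∑ i, x i)⁻¹ • x, smul_nonneg (inv_nonneg.2 hsum.le) hx, ?_, ?_⟩
  · simp [← Finset.mul_sum, hsum.ne']
  · rw [mulVec_smul, smul_comm]
    exact smul_le_smul_of_nonneg_left h (inv_nonneg.2 hsum.le)

theorem mulVec_pos_of_pos (hC : ∀ i j, 0 < C i j) (hx : 0 ≤ x) (hx0 : x ≠ 0) (i : n) :
    0 < (C *ᵥ x) i := by
  obtain ⟨j, hj⟩ := Function.ne_iff.mp hx0
  exact Finset.sum_pos' (fun k _ => mul_nonneg (hC i k).le (hx k))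
    ⟨j, Finset.mem_univ j, mul_pos (hC i j) ((hx j).lt_of_ne' hj)⟩

theorem exists_pos_smul_le {u : n → ℝ} (hu : ∀ i, 0 < u i) (y : n → ℝ) :
    ∃ ε > (0 : ℝ), ε • y ≤ u := by
  have : ∀ᶠ ε in 𝓝 (0 : ℝ), ∀ i, ε * y i < u i := eventually_all.2 fun i =>
    ((continuous_id.mul continuous_const).tendsto' 0 0 (zero_mul _)).eventually_lt_const (hu i)
  obtain ⟨ε, hε, hεpos⟩ := ((this.filter_mono nhdsWithin_le_nhds).and
    (self_mem_nhdsWithin (s := Set.Ioi 0))).exists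
  exact ⟨ε, hεpos, fun i => (hε i).le⟩

theorem exists_lt_smul_le_mulVec_of_pos (hC : ∀ i j, 0 < C i j) (hx : 0 ≤ x) (hx0 : x ≠ 0)
    (h : s • x ≤ C *ᵥ x) (hne : C *ᵥ x ≠ s • x) :
    ∃ s' > s, ∃ y, 0 ≤ y ∧ y ≠ 0 ∧ s' • y ≤ C *ᵥ y := by
  set u := C *ᵥ x - s • x
  have hu : 0 ≤ u := sub_nonneg.2 h
  have hCu := mulVec_pos_of_pos hC hu (sub_ne_zero.2 hne)
  have hy := mulVec_pos_of_pos hC hx hx0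
  obtain ⟨ε, hε, hεy⟩ := exists_pos_smul_le hCu (C *ᵥ x)
  obtain ⟨j, -⟩ := Function.ne_iff.mp hx0
  refine ⟨s + ε, by linarith, C *ᵥ x, fun i => (hy i).le,
    fun h0 => (hy j).ne' (congrFun h0 j), ?_⟩
  calc (s + ε) • C *ᵥ x = C *ᵥ (s • x) + ε • C *ᵥ x := by rw [add_smul, mulVec_smul]
    _ ≤ C *ᵥ (s • x) + C *ᵥ u := by gcongr
    _ = C *ᵥ (C *ᵥ x) := by rw [← mulVec_add, add_sub_cancel]

theorem exists_mem_spectrum_ge_of_pos [DecidableEq n] (hC : ∀ i j, 0 < C i j) (hx : 0 ≤ x)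
    (hx0 : x ≠ 0) (h : s • x ≤ C *ᵥ x) :
    ∃ r ∈ spectrum ℝ C, s ≤ r ∧ r ≤ ∑ i, ∑ j, C i j := by
  have hC_nonneg (i j : n) : 0 ≤ C i j := (hC i j).le
  set K : Set (ℝ × (n → ℝ)) :=
    {p | s ≤ p.1 ∧ 0 ≤ p.2 ∧ ∑ i, p.2 i = 1 ∧ p.1 • p.2 ≤ C *ᵥ p.2}
  have hK_sub : K ⊆ Set.Icc s (∑ i, ∑ j, C i j) ×ˢ Set.Icc 0 1 :=
    fun p ⟨hs, hp, hp1, hpC⟩ => ⟨⟨hs, le_sum_sum_of_smul_le_mulVec hC_nonneg hp hp1 hpC⟩, hp,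
      fun i => by simpa [hp1] using Finset.single_le_sum (fun k _ => hp k) (Finset.mem_univ i)⟩
  have hK_closed : IsClosed K :=
    (isClosed_le continuous_const continuous_fst).inter <|
      (isClosed_le continuous_const continuous_snd).inter <|
      (isClosed_eq (continuous_finsetSum _ fun i _ => (continuous_apply i).comp continuous_snd)
        continuous_const).inter <|
      isClosed_le (continuous_fst.smul continuous_snd)
        (continuous_const.matrix_mulVec continuous_snd)
  have hK : IsCompact K :=
    (isCompact_Icc.prod isCompact_Icc).of_isClosed_subset hK_closed hK_sub
  obtain ⟨x₁, hx₁, hx₁1, hx₁C⟩ := exists_sum_eq_one_of_smul_le_mulVec hx hx0 h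
  obtain ⟨⟨r, y⟩, ⟨hsr, hy, hy1, hyC⟩, hmax⟩ :=
    hK.exists_isMaxOn ⟨(s, x₁), le_rfl, hx₁, hx₁1, hx₁C⟩ continuous_fst.continuousOn
  have hy0 : y ≠ 0 := by rintro rfl; simp at hy1
  refine ⟨r, ?_, hsr, (hK_sub ⟨hsr, hy, hy1, hyC⟩).1.2⟩
  by_contra hr
  have hne : C *ᵥ y ≠ r • y := fun hCy =>
    hr (mem_spectrum_iff_exists_mulVec_eq_smul.2 ⟨y, hy0, hCy⟩)
  obtain ⟨r', hr', z, hz, hz0, hzC⟩ := exists_lt_smul_le_mulVec_of_pos hC hy hy0 hyC hne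
  obtain ⟨z₁, hz₁, hz₁1, hz₁C⟩ := exists_sum_eq_one_of_smul_le_mulVec hz hz0 hzC
  exact (hmax (a := (r', z₁)) ⟨hsr.trans hr'.le, hz₁, hz₁1, hz₁C⟩).not_gt hr'

theorem exists_mem_spectrum_ge_of_nonneg [DecidableEq n] (hC : ∀ i j, 0 ≤ C i j) (hx : 0 ≤ x)
    (hx0 : x ≠ 0) (h : s • x ≤ C *ᵥ x) : ∃ r ∈ spectrum ℝ C, s ≤ r := by
  set J : Matrix n n ℝ := of fun _ _ => 1
  set R := ∑ i, ∑ j, (C + J) i j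
  -- If `C` has no eigenvalue in `[s, R]`, then by compactness neither has `C + ε • J` for small
  -- `ε > 0`, contradicting the positive case.
  by_contra! hC_spec
  have hcont : Continuous fun p : ℝ × ℝ => (C + p.1 • J).charpoly.eval p.2 :=
    continuous_eval_charpoly.comp
      ((continuous_const.add (continuous_fst.smul continuous_const)).prodMk continuous_snd)
  have hroot : ∀ r ∈ Set.Icc s R,
      ∀ᶠ p : ℝ × ℝ in 𝓝 (0, r), (C + p.1 • J).charpoly.eval p.2 ≠ 0 := fun r hr =>
    hcont.continuousAt.eventually_ne
      (by simpa [mem_spectrum_iff_isRoot_charpoly] using fun h => (hC_spec r h).not_ge hr.1)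
  have hsmall := isCompact_Icc.eventually_forall_of_forall_eventually
    (P := fun ε r => (C + ε • J).charpoly.eval r ≠ 0) hroot
  obtain ⟨ε, hε, hε0, hε1⟩ :=
    ((hsmall.filter_mono nhdsWithin_le_nhds).and (Ioc_mem_nhdsGT zero_lt_one)).exists
  have hCε_apply (i j : n) : (C + ε • J) i j = C i j + ε := by
    simp only [J, Matrix.add_apply, smul_of, of_apply, Pi.smul_apply, smul_eq_mul, mul_one]
  have hCε (i j : n) : 0 < (C + ε • J) i j := hCε_apply i j ▸ add_pos_of_nonneg_of_pos (hC i j) hε0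
  have hsε : s • x ≤ (C + ε • J) *ᵥ x := by
    refine h.trans fun i => ?_
    simp only [add_mulVec, Pi.add_apply, le_add_iff_nonneg_right]
    exact Finset.sum_nonneg fun j _ => mul_nonneg (by simp [J, hε0.le]) (hx j)
  obtain ⟨r, hr, hsr, hrR⟩ := exists_mem_spectrum_ge_of_pos hCε hx hx0 hsε
  refine hε r ⟨hsr, hrR.trans ?_⟩ (mem_spectrum_iff_isRoot_charpoly.1 hr)
  exact Finset.sum_le_sum fun i _ => Finset.sum_le_sum fun j _ => by
    simpa [hCε_apply, J] using hε1

theorem exists_mem_spectrum_ge_norm_of_nonneg [DecidableEq n] (hC : ∀ i j, 0 ≤ C i j) {μ : ℂ}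
    (hμ : μ ∈ spectrum ℂ (C.map Complex.ofReal)) : ∃ r ∈ spectrum ℝ C, ‖μ‖ ≤ r := by
  obtain ⟨v, hv0, hv⟩ := mem_spectrum_iff_exists_mulVec_eq_smul.1 hμ
  refine exists_mem_spectrum_ge_of_nonneg hC (x := fun i => ‖v i‖) (fun i => norm_nonneg _)
    (fun h => hv0 (funext fun i => norm_eq_zero.1 (congrFun h i))) fun i => ?_
  calc ‖μ‖ * ‖v i‖ = ‖∑ j, (C i j : ℂ) * v j‖ := by
        rw [← norm_mul, ← smul_eq_mul, ← Pi.smul_apply, ← hv]; rfl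
    _ ≤ ∑ j, C i j * ‖v j‖ := (norm_sum_le _ _).trans_eq <| Finset.sum_congr rfl fun j _ => by
        rw [norm_mul, Complex.norm_real, Real.norm_of_nonneg (hC i j)]

end Matrix

theorem isOpen_setOf_isHurwitz {d : ℕ} :
    IsOpen {A : Matrix (Fin d) (Fin d) ℝ | IsHurwitz A} := by
  -- any Banach-algebra norm inducing the entrywise topology gives access to
  -- the upper hemicontinuity of the spectrum
  let _ := Matrix.linftyOpNormedRing (n := Fin d) (α := ℂ)
  let _ := Matrix.linftyOpNormedAlgebra (n := Fin d) (R := ℂ) (α := ℂ)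
  exact upperHemicontinuous_iff_isOpen_preimage_Iic.1
    ((upperHemicontinuous_spectrum ℂ (Matrix (Fin d) (Fin d) ℂ)).comp
      (continuous_id.matrix_map Complex.continuous_ofReal))
    {z : ℂ | z.re < 0} (isOpen_lt Complex.continuous_re continuous_const)

section

variable {d : ℕ} {A : Matrix (Fin d) (Fin d) ℝ}

theorem IsHurwitz.eval_charpoly_pos (hA : IsHurwitz A) {t : ℝ} (ht : 0 ≤ t) :
    0 < A.charpoly.eval t := by
  refine A.charpoly_monic.eval_pos_of_forall_ne_zero (fun s hs hroot => ?_) ht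
  have hs_mem : (s : ℂ) ∈ spectrum ℂ (A.map Complex.ofReal) := by
    rw [mem_spectrum_map_ofReal_iff, mem_aroots, ← Complex.coe_algebraMap,
      aeval_algebraMap_apply_eq_algebraMap_eval, hroot, map_zero]
    exact ⟨A.charpoly_monic.ne_zero, rfl⟩
  exact (hA _ hs_mem).not_ge (by simpa using hs)

theorem IsHurwitz.neg_one_pow_mul_det_pos (hA : IsHurwitz A) : 0 < (-1) ^ d * A.det := by
  simpa [eval_charpoly, det_neg] using hA.eval_charpoly_pos le_rfl

theorem IsHurwitz.pow_le_abs_eval_charpoly (hA : IsHurwitz A) {t : ℝ} (ht : 0 ≤ t) :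
    t ^ d ≤ |A.charpoly.eval t| := by
  simpa [charpoly_natDegree_eq_dim] using A.charpoly_monic.pow_natDegree_le_abs_eval
    (fun z hz => (hA z (mem_spectrum_map_ofReal_iff.2 hz)).le) ht

theorem IsMetzler.exists_mem_spectrum_ge_re (hA : IsMetzler A) {z : ℂ}
    (hz : z ∈ spectrum ℂ (A.map Complex.ofReal)) : ∃ t ∈ spectrum ℝ A, z.re ≤ t := by
  set c := ∑ i, |A i i|
  have hB (i j : Fin d) : 0 ≤ (algebraMap ℝ _ c + A) i j := by
    rcases eq_or_ne i j with rfl | hij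
    · have := Finset.single_le_sum (fun k _ => abs_nonneg (A k k)) (Finset.mem_univ i)
      simp only [Matrix.add_apply, algebraMap_matrix_apply, if_true, Algebra.algebraMap_self,
        RingHom.id_apply]
      linarith [neg_abs_le (A i i)]
    · simpa [algebraMap_matrix_apply, hij] using hA i j hij
  have hzc : z + c ∈ spectrum ℂ ((algebraMap ℝ _ c + A).map Complex.ofReal) := by
    have hmap : (algebraMap ℝ _ c + A).map Complex.ofReal =
        algebraMap ℂ _ (c : ℂ) + A.map Complex.ofReal := by
      ext i j
      rcases eq_or_ne i j with rfl | hij <;> simp [algebraMap_matrix_apply, *]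
    exact hmap ▸ spectrum.add_mem_add_iff.2 hz
  obtain ⟨r, hr, hzr⟩ := exists_mem_spectrum_ge_norm_of_nonneg hB hzc
  refine ⟨r - c, spectrum.add_mem_add_iff.1 (by rwa [sub_add_cancel]), ?_⟩
  have := Complex.re_le_norm (z + c)
  simp only [Complex.add_re, Complex.ofReal_re] at this
  linarith

theorem IsMetzler.eventually_not_isHurwitz (hA : IsMetzler A) (hH : ¬IsHurwitz A)
    (hdet : A.det ≠ 0) : ∀ᶠ B in 𝓝 A, ¬IsHurwitz B := by
  obtain ⟨z, hz, hre⟩ : ∃ z ∈ spectrum ℂ (A.map Complex.ofReal), 0 ≤ z.re := by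
    simpa [IsHurwitz] using hH
  obtain ⟨t, ht, hzt⟩ := hA.exists_mem_spectrum_ge_re hz
  have ht0 : 0 < t := (hre.trans hzt).lt_of_ne fun h0 => hdet <| by
    rw [← h0, spectrum.zero_mem_iff, isUnit_iff_isUnit_det, isUnit_iff_ne_zero, not_not] at ht
    exact ht
  have hroot : A.charpoly.eval t = 0 := mem_spectrum_iff_isRoot_charpoly.1 ht
  have hsmall : ∀ᶠ B in 𝓝 A, |B.charpoly.eval t| < t ^ d :=
    (continuous_eval_charpoly.comp (continuous_id.prodMk continuous_const)).abs.continuousAt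
      |>.eventually_lt continuousAt_const (by simpa [hroot] using pow_pos ht0 d)
  filter_upwards [hsmall] with B hB hBH
  exact (hBH.pow_le_abs_eval_charpoly ht0.le).not_gt hB

theorem IsMetzler.eventually_isHurwitz_iff (hA : IsMetzler A) (hdet : A.det ≠ 0) :
    ∀ᶠ B in 𝓝 A, IsHurwitz B ↔ IsHurwitz A := by
  by_cases hH : IsHurwitz A
  · filter_upwards [isOpen_setOf_isHurwitz.mem_nhds hH] with B hB using iff_of_true hB hH
  · filter_upwards [hA.eventually_not_isHurwitz hH hdet] with B hB using iff_of_false hB hH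

end

theorem parameterized_metzler_hurwitz_iff_det_general {N d : ℕ}
    (Θ : Set (Fin N → ℝ)) (hconn : IsConnected Θ)
    (M : (Fin N → ℝ) → Matrix (Fin d) (Fin d) ℝ)
    (hcont : ContinuousOn M Θ)
    (hMetz : ∀ θ ∈ Θ, IsMetzler (M θ)) :
    (∀ θ ∈ Θ, IsHurwitz (M θ)) ↔
      ((∃ θs ∈ Θ, IsHurwitz (M θs)) ∧ ∀ θ ∈ Θ, 0 < (-1 : ℝ) ^ d * (M θ).det) := by
  constructor
  · intro h
    obtain ⟨θ₀, hθ₀⟩ := hconn.nonempty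
    exact ⟨⟨θ₀, hθ₀, h θ₀ hθ₀⟩, fun θ hθ => (h θ hθ).neg_one_pow_mul_det_pos⟩
  · rintro ⟨⟨θs, hθs, hHs⟩, hdet⟩ θ hθ
    have hlocal : ∀ x ∈ Θ, ∀ᶠ y in 𝓝[Θ] x, (IsHurwitz (M x) ↔ IsHurwitz (M y)) := fun x hx =>
      ((hcont x hx).eventually <| (hMetz x hx).eventually_isHurwitz_iff
        (right_ne_zero_of_mul (hdet x hx).ne')).mono fun _ => Iff.symm
    exact (hconn.isPreconnected.induction₂ (fun x y => IsHurwitz (M x) ↔ IsHurwitz (M y))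
      hlocal (fun _ _ _ _ _ _ => Iff.trans) (fun _ _ _ _ => Iff.symm) hθs hθ).1 hHs

theorem parameterized_metzler_hurwitz_iff_det {N d : ℕ}
    (Θ : Set (Fin N → ℝ)) (hc : IsCompact Θ) (hconn : IsConnected Θ)
    (M : (Fin N → ℝ) → Matrix (Fin d) (Fin d) ℝ)
    (hcont : ContinuousOn M Θ)
    (hMetz : ∀ θ ∈ Θ, IsMetzler (M θ)) :
    (∀ θ ∈ Θ, IsHurwitz (M θ)) ↔
      ((∃ θs ∈ Θ, IsHurwitz (M θs)) ∧ ∀ θ ∈ Θ, 0 < (-1 : ℝ) ^ d * (M θ).det) :=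
  parameterized_metzler_hurwitz_iff_det_general Θ hconn M hcont hMetz
end

section
/- Let Σ be a d×d sign pattern and let 𝒬(Σ) = {M ∈ ℝ^{d×d} : sgn(M_{ij}) = sgn(Σ_{ij}) for all i,j} be its qualitative class, where the off-diagonal signs are nonnegative (so all M in 𝒬(Σ) are Metzler). Then every matrix in 𝒬(Σ) is Hurwitz stable if and only if the sign matrix sgn(Σ) ∈ {−1,0,1}^{d×d} is Hurwitz stable. -/
open Matrix

/-!
A Metzler matrix `S` with a vector `v ≥ 0`, `v ≠ 0`, `S v ≥ 0` is not Hurwitz: for small `t > 0`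
the matrix `B = 1 + t S` is entrywise nonnegative with `v ≤ B v`, so the powers of `B` do not tend
to `0`, and by Gelfand's formula `B` has an eigenvalue `1 + t z` of modulus at least `1`. As `t → 0`
this forces `0 ≤ re z` for one of the finitely many eigenvalues `z` of `S`.

Taking for `v` a unit vector, resp. the indicator of the support of a permutation `σ ≠ 1`, shows
that if `sgn P` is Hurwitz then `P` has negative diagonal and every `σ ≠ 1` meets a zero entry
`P (σ i) i` with `σ i ≠ i`. For `M` with the sign pattern of `P` only the identity permutation then
contributes to `det (z - M)`, so the eigenvalues of `M` are its negative diagonal entries.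
-/

open Filter Topology
open scoped Pointwise

-- Only the induced topology matters, which is the product topology for every such norm.
attribute [local instance] Matrix.linftyOpNormedRing Matrix.linftyOpNormedAlgebra

theorem tendsto_pow_atTop_nhds_zero_of_spectralRadius_lt_one {A : Type*} [NormedRing A]
    [NormedAlgebra ℂ A] [CompleteSpace A] {a : A} (h : spectralRadius ℂ a < 1) :
    Tendsto (a ^ ·) atTop (𝓝 0) := by
  obtain ⟨r, hρr, hr⟩ := ENNReal.lt_iff_exists_nnreal_btwn.1 h
  have hr1 : r < 1 := by exact_mod_cast hr
  have hbound : ∀ᶠ m : ℕ in atTop, ‖a ^ m‖ ≤ r ^ m := by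
    filter_upwards [(spectrum.pow_norm_pow_one_div_tendsto_nhds_spectralRadius a).eventually
      (gt_mem_nhds hρr), eventually_ne_atTop 0] with m hm hm0
    rw [← ENNReal.ofReal_coe_nnreal, ENNReal.ofReal_lt_ofReal_iff_of_nonneg (by positivity),
      one_div] at hm
    calc ‖a ^ m‖ = (‖a ^ m‖ ^ (m⁻¹ : ℝ)) ^ m :=
          (Real.rpow_inv_natCast_pow (norm_nonneg _) hm0).symm
      _ ≤ r ^ m := pow_le_pow_left₀ (by positivity) hm.le m
  exact squeeze_zero_norm' hbound (tendsto_pow_atTop_nhds_zero_of_lt_one r.2 hr1)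

theorem Complex.eventually_norm_one_add_mul_lt_one {z : ℂ} (hz : z.re < 0) :
    ∀ᶠ t : ℝ in 𝓝[>] 0, ‖1 + t * z‖ < 1 := by
  have hsmall : ∀ᶠ t : ℝ in 𝓝[>] 0, t * ‖z‖ ^ 2 < -2 * z.re :=
    nhdsWithin_le_nhds <| (continuous_id.mul continuous_const).tendsto' 0 0 (by simp)
      |>.eventually (gt_mem_nhds (by linarith))
  filter_upwards [hsmall, self_mem_nhdsWithin] with t ht (htpos : 0 < t)
  have hnorm : ‖1 + t * z‖ ^ 2 = 1 + t * (2 * z.re + t * ‖z‖ ^ 2) := by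
    simp only [Complex.sq_norm, Complex.normSq_apply, Complex.add_re, Complex.add_im,
      Complex.one_re, Complex.one_im, Complex.re_ofReal_mul, Complex.im_ofReal_mul]
    ring
  rw [← sq_lt_one_iff₀ (norm_nonneg _), hnorm]
  nlinarith

namespace Matrix

variable {n : Type*} [Fintype n]

theorem mulVec_mono_of_nonneg {B : Matrix n n ℝ} (hB : ∀ i j, 0 ≤ B i j) :
    Monotone (B *ᵥ ·) := fun _ _ hxy i =>
  Finset.sum_le_sum fun j _ => mul_le_mul_of_nonneg_left (hxy j) (hB i j)

variable [DecidableEq n]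

theorem le_pow_mulVec_of_le_mulVec {B : Matrix n n ℝ} (hB : ∀ i j, 0 ≤ B i j) {v : n → ℝ}
    (hBv : v ≤ B *ᵥ v) (m : ℕ) : v ≤ B ^ m *ᵥ v := by
  induction m with
  | zero => simp
  | succ m ih =>
    calc v ≤ B *ᵥ v := hBv
      _ ≤ B *ᵥ (B ^ m *ᵥ v) := mulVec_mono_of_nonneg hB ih
      _ = B ^ (m + 1) *ᵥ v := by rw [mulVec_mulVec, pow_succ']

theorem exists_one_le_norm_mem_spectrum_of_le_mulVec {B : Matrix n n ℝ}
    (hB : ∀ i j, 0 ≤ B i j) {v : n → ℝ} (hv : 0 ≤ v) (hv0 : v ≠ 0) (hBv : v ≤ B *ᵥ v) :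
    ∃ w ∈ spectrum ℂ (B.map Complex.ofReal), 1 ≤ ‖w‖ := by
  obtain ⟨i, hi⟩ := Function.ne_iff.1 hv0
  have : Nonempty n := ⟨i⟩
  by_contra! hsmall
  have hρ : spectralRadius ℂ (B.map Complex.ofReal) < 1 := by
    simpa using spectrum.spectralRadius_lt_of_forall_lt (B.map Complex.ofReal) (r := 1)
      fun w hw => by simpa [← NNReal.coe_lt_coe] using hsmall w hw
  have hpow : Tendsto (fun m : ℕ => B ^ m) atTop (𝓝 0) := by
    have hre : ∀ m : ℕ, (B.map Complex.ofReal ^ m).map Complex.re = B ^ m := fun m => by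
      change (Complex.ofRealHom.mapMatrix B ^ m).map Complex.re = B ^ m
      rw [← map_pow]
      ext i j
      simp
    simpa [Function.comp_def, hre] using
      ((continuous_id.matrix_map Complex.continuous_re).tendsto 0).comp
        (tendsto_pow_atTop_nhds_zero_of_spectralRadius_lt_one hρ)
  have hlim : Tendsto (fun m : ℕ => B ^ m *ᵥ v) atTop (𝓝 0) := by
    simpa [Function.comp_def] using
      ((continuous_id.matrix_mulVec continuous_const).tendsto 0).comp hpow
  have hv_le : v ≤ 0 := ge_of_tendsto' hlim (le_pow_mulVec_of_le_mulVec hB hBv)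
  exact hi (le_antisymm (hv_le i) (hv i))

theorem det_eq_prod_diag_of_forall_perm {R : Type*} [CommRing R] {A : Matrix n n R}
    (h : ∀ σ : Equiv.Perm n, σ ≠ 1 → ∃ i, A (σ i) i = 0) : A.det = ∏ i, A i i := by
  rw [det_apply, Finset.sum_eq_single 1]
  · simp
  · intro σ _ hσ
    obtain ⟨i, hi⟩ := h σ hσ
    rw [Finset.prod_eq_zero (f := fun j => A (σ j) j) (Finset.mem_univ i) hi, smul_zero]
  · simp

theorem exists_eq_diag_of_mem_spectrum {K : Type*} [Field K] {A : Matrix n n K}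
    (h : ∀ σ : Equiv.Perm n, σ ≠ 1 → ∃ i, σ i ≠ i ∧ A (σ i) i = 0) {z : K}
    (hz : z ∈ spectrum K A) : ∃ i, z = A i i := by
  rw [spectrum.mem_iff, isUnit_iff_isUnit_det, isUnit_iff_ne_zero, not_not,
    det_eq_prod_diag_of_forall_perm] at hz
  · obtain ⟨i, -, hi⟩ := Finset.prod_eq_zero_iff.1 hz
    exact ⟨i, by simpa [algebraMap_matrix_apply, sub_eq_zero] using hi⟩
  · intro σ hσ
    obtain ⟨i, hσi, hi⟩ := h σ hσ
    exact ⟨i, by simp [algebraMap_matrix_apply, hσi, hi]⟩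

end Matrix

theorem IsMetzler.not_isHurwitz_of_mulVec_nonneg {d : ℕ} {S : Matrix (Fin d) (Fin d) ℝ}
    (hS : IsMetzler S) {v : Fin d → ℝ} (hv : 0 ≤ v) (hv0 : v ≠ 0) (hSv : 0 ≤ S *ᵥ v) :
    ¬IsHurwitz S := by
  intro hH
  obtain ⟨i₀, -⟩ := Function.ne_iff.1 hv0
  have : Nonempty (Fin d) := ⟨i₀⟩
  have hshrink : ∀ᶠ t : ℝ in 𝓝[>] 0,
      ∀ z ∈ spectrum ℂ (S.map Complex.ofReal), ‖1 + t * z‖ < 1 :=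
    (eventually_all_finite (Matrix.finite_spectrum _)).2 fun z hz =>
      Complex.eventually_norm_one_add_mul_lt_one (hH z hz)
  have hdiag : ∀ᶠ t : ℝ in 𝓝[>] 0, ∀ i, 0 ≤ 1 + t * S i i :=
    eventually_all.2 fun i => nhdsWithin_le_nhds <|
      ((continuous_const.add (continuous_id.mul continuous_const)).tendsto' 0 1 (by simp)
        |>.eventually_const_lt one_pos).mono fun _ h => h.le
  obtain ⟨t, ⟨ht_shrink, ht_diag⟩, ht : 0 < t⟩ :=
    ((hshrink.and hdiag).and self_mem_nhdsWithin).exists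
  have hB : ∀ i j, 0 ≤ (1 + t • S) i j := by
    intro i j
    rcases eq_or_ne i j with rfl | hij
    · simpa using ht_diag i
    · simpa [one_apply_ne hij] using mul_nonneg ht.le (hS i j hij)
  have hBv : v ≤ (1 + t • S) *ᵥ v := by
    rw [add_mulVec, one_mulVec, smul_mulVec]
    exact le_add_of_nonneg_right (smul_nonneg ht.le hSv)
  obtain ⟨w, hw, hw1⟩ := exists_one_le_norm_mem_spectrum_of_le_mulVec hB hv hv0 hBv
  have hspec : spectrum ℂ ((1 + t • S).map Complex.ofReal)
      = {1} + (t : ℂ) • spectrum ℂ (S.map Complex.ofReal) := by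
    have hmap : (1 + t • S).map Complex.ofReal
        = algebraMap ℂ _ 1 + (t : ℂ) • S.map Complex.ofReal := by
      ext i j
      rcases eq_or_ne i j with rfl | hij <;> simp [one_apply, *]
    rw [hmap, ← spectrum.singleton_add_eq, spectrum.smul_eq_smul _ _ (spectrum.nonempty _)]
  rw [hspec] at hw
  obtain ⟨_, rfl, _, ⟨z, hz, rfl⟩, rfl⟩ := hw
  exact (ht_shrink z hz).not_ge (by simpa using hw1)

theorem IsMetzler.not_isHurwitz_of_perm {d : ℕ} {S : Matrix (Fin d) (Fin d) ℝ}
    (hS : IsMetzler S) {σ : Equiv.Perm (Fin d)} (hσ : σ ≠ 1)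
    (hcycle : ∀ i, σ i ≠ i → 0 ≤ S (σ i) (σ i) + S (σ i) i) : ¬IsHurwitz S := by
  classical
  set v : Fin d → ℝ := fun j => if j ∈ σ.support then 1 else 0
  have hSv : ∀ l, (S *ᵥ v) l = ∑ j ∈ σ.support, S l j := by
    simp [v, mulVec, dotProduct, Equiv.Perm.support, Finset.sum_filter]
  refine hS.not_isHurwitz_of_mulVec_nonneg (v := v) (fun j => ?_) ?_ (fun l => ?_)
  · simp only [v]
    split_ifs <;> norm_num
  · obtain ⟨i, hi⟩ := Finset.nonempty_of_ne_empty (mt Equiv.Perm.support_eq_empty_iff.1 hσ)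
    exact Function.ne_iff.2 ⟨i, by simpa [v] using Equiv.Perm.mem_support.1 hi⟩
  · rw [Pi.zero_apply, hSv]
    by_cases hl : l ∈ σ.support
    · obtain ⟨i, rfl⟩ := σ.surjective l
      have hi : σ i ≠ i := Equiv.Perm.mem_support.1 (Equiv.Perm.apply_mem_support.1 hl)
      calc 0 ≤ S (σ i) (σ i) + S (σ i) i := hcycle i hi
        _ = ∑ j ∈ {σ i, i}, S (σ i) j := (Finset.sum_pair hi).symm
        _ ≤ ∑ j ∈ σ.support, S (σ i) j := by
          refine Finset.sum_le_sum_of_subset_of_nonneg ?_ fun j _ hj => hS _ _ ?_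
          · simp [Finset.insert_subset_iff, hl, Equiv.Perm.mem_support, hi]
          · exact fun h => hj (by simp [h])
    · exact Finset.sum_nonneg fun j hj => hS l j fun h => hl (h ▸ hj)

noncomputable def signMatrix {n : Type*} (P : Matrix n n ℝ) : Matrix n n ℝ :=
  of fun i j => ((SignType.sign (P i j) : ℤ) : ℝ)

@[simp]
theorem signMatrix_apply {n : Type*} (P : Matrix n n ℝ) (i j : n) :
    signMatrix P i j = SignType.sign (P i j) := by
  simp [signMatrix]

theorem signMatrix_nonneg {n : Type*} {P : Matrix n n ℝ} {i j : n} (h : 0 ≤ P i j) :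
    0 ≤ signMatrix P i j := by
  rcases h.eq_or_lt with h | h
  · simp [← h]
  · simp [sign_pos h]

theorem sign_signMatrix_apply {n : Type*} (P : Matrix n n ℝ) (i j : n) :
    SignType.sign (signMatrix P i j) = SignType.sign (P i j) := by
  rw [signMatrix_apply]
  cases SignType.sign (P i j) <;> simp

theorem neg_one_le_signMatrix {n : Type*} (P : Matrix n n ℝ) (i j : n) :
    -1 ≤ signMatrix P i j := by
  rw [signMatrix_apply]
  cases SignType.sign (P i j) <;> norm_num

section SignMatrix

variable {d : ℕ} {P : Matrix (Fin d) (Fin d) ℝ}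

theorem IsMetzler.isMetzler_signMatrix (hP : IsMetzler P) : IsMetzler (signMatrix P) :=
  fun i j hij => signMatrix_nonneg (hP i j hij)

theorem IsMetzler.diag_neg_of_isHurwitz_signMatrix (hP : IsMetzler P)
    (hH : IsHurwitz (signMatrix P)) (i : Fin d) : P i i < 0 := by
  by_contra! hi
  refine hP.isMetzler_signMatrix.not_isHurwitz_of_mulVec_nonneg (v := Pi.single i 1) ?_ ?_ ?_ hH
  · exact Pi.single_nonneg.2 zero_le_one
  · simp
  · intro j
    rw [mulVec_single_one]
    rcases eq_or_ne j i with rfl | hji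
    · exact signMatrix_nonneg hi
    · exact hP.isMetzler_signMatrix j i hji

theorem IsMetzler.exists_eq_zero_of_isHurwitz_signMatrix (hP : IsMetzler P)
    (hH : IsHurwitz (signMatrix P)) {σ : Equiv.Perm (Fin d)} (hσ : σ ≠ 1) :
    ∃ i, σ i ≠ i ∧ P (σ i) i = 0 := by
  by_contra! hcycle
  refine hP.isMetzler_signMatrix.not_isHurwitz_of_perm hσ (fun i hi => ?_) hH
  have hoff : signMatrix P (σ i) i = 1 := by
    simp [sign_pos ((hP (σ i) i hi).lt_of_ne' (hcycle i hi))]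
  linarith [neg_one_le_signMatrix P (σ i) (σ i)]

end SignMatrix

theorem sign_stability_iff_sign_matrix_hurwitz {d : ℕ}
    (P : Matrix (Fin d) (Fin d) ℝ) (hP : ∀ i j, i ≠ j → 0 ≤ P i j) :
    (∀ M : Matrix (Fin d) (Fin d) ℝ,
        (∀ i j, SignType.sign (M i j) = SignType.sign (P i j)) → IsHurwitz M) ↔
      IsHurwitz (Matrix.of fun i j => ((SignType.sign (P i j) : ℤ) : ℝ)) := by
  refine ⟨fun h => h (signMatrix P) (sign_signMatrix_apply P), fun hH M hM z hz => ?_⟩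
  have hdiag : ∀ i, M i i < 0 := fun i => sign_eq_neg_one_iff.1 <|
    (hM i i).trans (sign_eq_neg_one_iff.2 (IsMetzler.diag_neg_of_isHurwitz_signMatrix hP hH i))
  have hzero : ∀ σ : Equiv.Perm (Fin d), σ ≠ 1 →
      ∃ i, σ i ≠ i ∧ M.map Complex.ofReal (σ i) i = 0 := fun σ hσ => by
    obtain ⟨i, hσi, hi⟩ := IsMetzler.exists_eq_zero_of_isHurwitz_signMatrix hP hH hσ
    exact ⟨i, hσi, by simp [sign_eq_zero_iff.1 ((hM _ _).trans (sign_eq_zero_iff.2 hi))]⟩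
  obtain ⟨i, rfl⟩ := exists_eq_diag_of_mem_spectrum hzero hz
  simpa using hdiag i
end

section
/- Let A⁺ be a d×d Metzler Hurwitz-stable matrix and let v₊ be a strictly positive vector with v₊ᵀA⁺ < 0 componentwise. Then for every entrywise-nonnegative matrix Δ with A⁺ − Δ Metzler and Hurwitz stable, the vector v(Δ) := ((A⁺)(A⁺ − Δ)⁻¹)ᵀ v₊ is strictly positive and satisfies v(Δ)ᵀ(A⁺ − Δ) = v₊ᵀA⁺ < 0. -/
/-
If `M = A⁺ - Δ` is Metzler and `v₊ᵀ M ≤ v₊ᵀ A⁺ < 0` for the positive vector `v₊`, a maximum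
principle for Metzler matrices shows that `xᵀ M ≥ 0` forces `x ≤ 0`. Hence `M` is invertible with
`M⁻¹ ≤ 0` entrywise, and `v(Δ)ᵀ = (v₊ᵀ A⁺) M⁻¹` is a negative row vector times a nonpositive
matrix with no zero column, so it is strictly positive; `v(Δ)ᵀ M = v₊ᵀ A⁺` by cancellation.
-/

open Matrix

namespace IsMetzler

variable {d : ℕ} {M : Matrix (Fin d) (Fin d) ℝ}

theorem vecMul_apply_nonneg (hM : IsMetzler M) {z : Fin d → ℝ} (hz : ∀ i, 0 ≤ z i) {k : Fin d}
    (hzk : z k = 0) : 0 ≤ (z ᵥ* M) k := by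
  refine Finset.sum_nonneg (fun j _ => ?_ : ∀ j ∈ Finset.univ, 0 ≤ z j * M j k)
  rcases eq_or_ne j k with rfl | hjk
  · simp [hzk]
  · exact mul_nonneg (hz j) (hM j k hjk)

/-- Maximum principle: with `t = maxᵢ xᵢ / wᵢ > 0` attained at `k`, the vector `t w - x` is
nonnegative and vanishes at `k`, so `(xᵀ M)ₖ ≤ t (wᵀ M)ₖ < 0`. -/
theorem nonpos_of_vecMul_nonneg (hM : IsMetzler M) {w : Fin d → ℝ} (hw : ∀ i, 0 < w i)
    (hwM : ∀ j, (w ᵥ* M) j < 0) {x : Fin d → ℝ} (hx : ∀ j, 0 ≤ (x ᵥ* M) j) (i : Fin d) :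
    x i ≤ 0 := by
  obtain ⟨k, -, hk⟩ := Finset.exists_max_image Finset.univ (fun i => x i / w i)
    ⟨i, Finset.mem_univ i⟩
  set t := x k / w k
  have hx_le : ∀ j, x j ≤ t * w j := fun j =>
    (div_le_iff₀ (hw j)).1 (hk j (Finset.mem_univ j))
  rcases le_or_gt t 0 with ht | ht
  · exact (hx_le i).trans (mul_nonpos_of_nonpos_of_nonneg ht (hw i).le)
  · have hgap : 0 ≤ ((t • w - x) ᵥ* M) k :=
      hM.vecMul_apply_nonneg (fun j => by simpa using hx_le j)
        (by simp [t, div_mul_cancel₀ _ (hw k).ne'])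
    rw [sub_vecMul, smul_vecMul, Pi.sub_apply, Pi.smul_apply, smul_eq_mul] at hgap
    nlinarith [hwM k, hx k]

theorem det_ne_zero (hM : IsMetzler M) {w : Fin d → ℝ} (hw : ∀ i, 0 < w i)
    (hwM : ∀ j, (w ᵥ* M) j < 0) : M.det ≠ 0 := by
  intro hdet
  obtain ⟨v, hv0, hv⟩ := exists_vecMul_eq_zero_iff.2 hdet
  have hle : ∀ i, v i ≤ 0 := hM.nonpos_of_vecMul_nonneg hw hwM (by simp [hv])
  have hge : ∀ i, (-v) i ≤ 0 :=
    hM.nonpos_of_vecMul_nonneg hw hwM (x := -v) (by simp [neg_vecMul, hv])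
  exact hv0 (funext fun i => le_antisymm (hle i) (neg_nonpos.1 (hge i)))

theorem inv_nonpos (hM : IsMetzler M) {w : Fin d → ℝ} (hw : ∀ i, 0 < w i)
    (hwM : ∀ j, (w ᵥ* M) j < 0) (i j : Fin d) : M⁻¹ i j ≤ 0 := by
  refine hM.nonpos_of_vecMul_nonneg hw hwM (fun k => ?_) j
  rw [← mul_apply_eq_vecMul, nonsing_inv_mul M (isUnit_iff_ne_zero.2 (hM.det_ne_zero hw hwM))]
  exact zero_le_one_elem i k

end IsMetzler

theorem vecMul_sub_apply_le_of_nonneg {ι : Type*} [Fintype ι] {A Δ : Matrix ι ι ℝ}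
    (hΔ : ∀ i j, 0 ≤ Δ i j) {w : ι → ℝ} (hw : ∀ i, 0 ≤ w i) (j : ι) : (w ᵥ* (A - Δ)) j ≤ (w ᵥ* A) j := by
  have hwΔ : 0 ≤ (w ᵥ* Δ) j := Finset.sum_nonneg fun i _ => mul_nonneg (hw i) (hΔ i j)
  rw [vecMul_sub, Pi.sub_apply]
  linarith

/-- Invertibility rules out a zero column of `N`, so each entry is a sum with a positive term. -/
theorem vecMul_pos_of_neg_of_nonpos {ι : Type*} [Fintype ι] [DecidableEq ι] {N : Matrix ι ι ℝ}
    (hN : IsUnit N.det) (hN_nonpos : ∀ i j, N i j ≤ 0) {y : ι → ℝ} (hy : ∀ i, y i < 0) (i : ι) :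
    0 < (y ᵥ* N) i := by
  obtain ⟨j, hj⟩ : ∃ j, N j i ≠ 0 := by
    by_contra! hcol
    have hii := congr_fun₂ (nonsing_inv_mul N hN) i i
    simp [mul_apply, hcol] at hii
  exact Finset.sum_pos' (fun k _ => mul_nonneg_of_nonpos_of_nonpos (hy k).le (hN_nonpos k i))
    ⟨j, Finset.mem_univ j, mul_pos_of_neg_of_neg (hy j) ((hN_nonpos j i).lt_of_ne hj)⟩

theorem interval_lyapunov_vector_transfer_general {d : ℕ}
    (Ap : Matrix (Fin d) (Fin d) ℝ)
    (vp : Fin d → ℝ) (hvp : ∀ i, 0 < vp i) (hvA : ∀ j, (vp ᵥ* Ap) j < 0)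
    (Δ : Matrix (Fin d) (Fin d) ℝ) (hΔ : ∀ i j, 0 ≤ Δ i j)
    (hMetz : IsMetzler (Ap - Δ)) :
    (∀ i, 0 < (vp ᵥ* (Ap * (Ap - Δ)⁻¹)) i) ∧
    (vp ᵥ* (Ap * (Ap - Δ)⁻¹)) ᵥ* (Ap - Δ) = vp ᵥ* Ap ∧
    (∀ j, ((vp ᵥ* (Ap * (Ap - Δ)⁻¹)) ᵥ* (Ap - Δ)) j < 0) := by
  have hvM : ∀ j, (vp ᵥ* (Ap - Δ)) j < 0 := fun j =>
    (vecMul_sub_apply_le_of_nonneg hΔ (fun i => (hvp i).le) j).trans_lt (hvA j)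
  have hdet : IsUnit (Ap - Δ).det := isUnit_iff_ne_zero.2 (hMetz.det_ne_zero hvp hvM)
  have hcancel : (vp ᵥ* (Ap * (Ap - Δ)⁻¹)) ᵥ* (Ap - Δ) = vp ᵥ* Ap := by
    rw [vecMul_vecMul, Matrix.mul_assoc, nonsing_inv_mul _ hdet, Matrix.mul_one]
  refine ⟨fun i => ?_, hcancel, fun j => hcancel ▸ hvA j⟩
  rw [← vecMul_vecMul]
  exact vecMul_pos_of_neg_of_nonpos (isUnit_nonsing_inv_det _ hdet)
    (hMetz.inv_nonpos hvp hvM) hvA i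

theorem interval_lyapunov_vector_transfer {d : ℕ}
    (Ap : Matrix (Fin d) (Fin d) ℝ) (hAp : IsMetzler Ap) (hH : IsHurwitz Ap)
    (vp : Fin d → ℝ) (hvp : ∀ i, 0 < vp i) (hvA : ∀ j, (vp ᵥ* Ap) j < 0)
    (Δ : Matrix (Fin d) (Fin d) ℝ) (hΔ : ∀ i j, 0 ≤ Δ i j)
    (hMetz : IsMetzler (Ap - Δ)) (hHΔ : IsHurwitz (Ap - Δ)) :
    (∀ i, 0 < (vp ᵥ* (Ap * (Ap - Δ)⁻¹)) i) ∧
    (vp ᵥ* (Ap * (Ap - Δ)⁻¹)) ᵥ* (Ap - Δ) = vp ᵥ* Ap ∧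
    (∀ j, ((vp ᵥ* (Ap * (Ap - Δ)⁻¹)) ᵥ* (Ap - Δ)) j < 0) :=
  interval_lyapunov_vector_transfer_general Ap vp hvp hvA Δ hΔ hMetz
end

section
/- Let A : ℝ^{n_dg}_{>0} × ℝ^{n_cv}_{>0} → ℝ^{d×d} be a Metzler-valued function of the form A(ρ_dg, ρ_cv) = −D(ρ_dg)·E + C(ρ_cv), where the dependence is linear in each parameter block and A(θρ_dg, θρ_cv) = θA(ρ_dg, ρ_cv) for θ > 0, and A is entrywise nonincreasing in ρ_dg. Then A(ρ_dg, ρ_cv) is Hurwitz stable for all positive (ρ_dg, ρ_cv) if and only if A(𝟙, ρ_cv) is Hurwitz stable for all positive ρ_cv. -/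
open Matrix

/-!
If `M₁` is Metzler and `M₁ ≤ M₂` entrywise, then for large `c` the shifts `M₁ + c` and `M₂ + c`
are nonnegative and still ordered, so Gelfand's formula together with the monotonicity of the
`∞`-operator norm on nonnegative matrices gives `ρ(M₁ + c) ≤ ρ(M₂ + c)`. If `M₂` is Hurwitz, its
finitely many eigenvalues `w` satisfy `|c + w| < c` once `c` is large, hence every eigenvalue `z`
of `M₁` satisfies `c + Re z ≤ |c + z| ≤ ρ(M₁ + c) < c`. For a positive lower bound `θ` of `ρ_dg`,
monotonicity in `ρ_dg` and homogeneity give `A(ρ_dg, ρ_cv) ≤ A(θ𝟙, ρ_cv) = θ A(𝟙, ρ_cv / θ)`,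
and multiplication by `θ > 0` preserves Hurwitz stability.
-/

open Filter

attribute [local instance] Matrix.linftyOpNormedRing Matrix.linftyOpNormedAlgebra

theorem Matrix.pow_apply_le_pow_apply_s17 {n α : Type*} [Fintype n] [DecidableEq n] [Semiring α]
    [PartialOrder α] [IsOrderedRing α] {N₁ N₂ : Matrix n n α} (h₀ : ∀ i j, 0 ≤ N₁ i j)
    (hle : ∀ i j, N₁ i j ≤ N₂ i j) (k : ℕ) (i j : n) : (N₁ ^ k) i j ≤ (N₂ ^ k) i j := by
  induction k generalizing i j with
  | zero => rfl
  | succ k ih =>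
    simp only [pow_succ, mul_apply]
    exact Finset.sum_le_sum fun l _ =>
      mul_le_mul (ih i l) (hle l j) (h₀ l j) ((Matrix.pow_apply_nonneg h₀ k i l).trans (ih i l))

section RealMatrix

variable {n : Type*} [Fintype n] [DecidableEq n]

theorem Matrix.map_ofReal_pow (N : Matrix n n ℝ) (k : ℕ) :
    (N ^ k).map Complex.ofReal = N.map Complex.ofReal ^ k :=
  Matrix.map_pow N Complex.ofRealHom k

theorem Matrix.linfty_opNNNorm_map_ofReal_mono {N₁ N₂ : Matrix n n ℝ} (h₀ : ∀ i j, 0 ≤ N₁ i j)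
    (hle : ∀ i j, N₁ i j ≤ N₂ i j) :
    ‖N₁.map Complex.ofReal‖₊ ≤ ‖N₂.map Complex.ofReal‖₊ := by
  simp only [linfty_opNNNorm_def, map_apply]
  gcongr with i _ j
  rw [← NNReal.coe_le_coe]
  simp only [coe_nnnorm, Complex.norm_real, Real.norm_of_nonneg (h₀ i j),
    Real.norm_of_nonneg ((h₀ i j).trans (hle i j)), hle i j]

theorem Matrix.spectralRadius_map_ofReal_mono {N₁ N₂ : Matrix n n ℝ} (h₀ : ∀ i j, 0 ≤ N₁ i j)
    (hle : ∀ i j, N₁ i j ≤ N₂ i j) :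
    spectralRadius ℂ (N₁.map Complex.ofReal) ≤ spectralRadius ℂ (N₂.map Complex.ofReal) := by
  refine le_of_tendsto_of_tendsto'
    (spectrum.pow_nnnorm_pow_one_div_tendsto_nhds_spectralRadius _)
    (spectrum.pow_nnnorm_pow_one_div_tendsto_nhds_spectralRadius _) fun k => ?_
  have hpow := Matrix.linfty_opNNNorm_map_ofReal_mono (Matrix.pow_apply_nonneg h₀ k)
    (pow_apply_le_pow_apply_s17 h₀ hle k)
  rw [Matrix.map_ofReal_pow, Matrix.map_ofReal_pow] at hpow
  gcongr

theorem Matrix.map_ofReal_add_smul_one_s17 (M : Matrix n n ℝ) (c : ℝ) :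
    (M + c • 1).map Complex.ofReal = algebraMap ℂ _ (c : ℂ) + M.map Complex.ofReal := by
  ext i j
  by_cases h : i = j <;> simp [algebraMap_matrix_apply, h, add_comm]

end RealMatrix

theorem Complex.eventually_norm_ofReal_add_lt {w : ℂ} (hw : w.re < 0) :
    ∀ᶠ c : ℝ in atTop, ‖(c : ℂ) + w‖ < c := by
  filter_upwards [eventually_gt_atTop 0,
    eventually_gt_atTop (‖w‖ ^ 2 / (-2 * w.re))] with c hc hcw
  have hsq : ‖(c : ℂ) + w‖ ^ 2 = c ^ 2 + 2 * c * w.re + ‖w‖ ^ 2 := by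
    rw [Complex.sq_norm, Complex.sq_norm, Complex.normSq_apply, Complex.normSq_apply]
    simp only [Complex.add_re, Complex.add_im, Complex.ofReal_re, Complex.ofReal_im]
    ring
  have : ‖w‖ ^ 2 < c * (-2 * w.re) := (div_lt_iff₀ (by linarith)).mp hcw
  exact lt_of_pow_lt_pow_left₀ 2 hc.le (by nlinarith)

theorem IsHurwitz.eventually_spectralRadius_lt {d : ℕ} {M : Matrix (Fin d) (Fin d) ℝ}
    (hM : IsHurwitz M) :
    ∀ᶠ c : ℝ in atTop,
      spectralRadius ℂ ((M + c • 1).map Complex.ofReal) < ENNReal.ofReal c := by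
  filter_upwards [eventually_gt_atTop 0, (eventually_all_finite
    (Matrix.finite_spectrum (M.map Complex.ofReal))).2
      fun w hw => Complex.eventually_norm_ofReal_add_lt (hM w hw)] with c hc hspec
  nontriviality Matrix (Fin d) (Fin d) ℂ using ENNReal.ofReal_pos, hc
  rw [ENNReal.ofReal, Matrix.map_ofReal_add_smul_one_s17]
  refine spectrum.spectralRadius_lt_of_forall_lt _ fun ζ hζ => ?_
  rw [← spectrum.singleton_add_eq] at hζ
  obtain ⟨_, rfl, w, hw, rfl⟩ := hζ
  rw [← NNReal.coe_lt_coe, coe_nnnorm, Real.coe_toNNReal _ hc.le]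
  exact hspec w hw

theorem IsMetzler.isHurwitz_of_le {d : ℕ} {M₁ M₂ : Matrix (Fin d) (Fin d) ℝ}
    (h₁ : IsMetzler M₁) (hle : ∀ i j, M₁ i j ≤ M₂ i j) (h₂ : IsHurwitz M₂) : IsHurwitz M₁ := by
  obtain ⟨c, hdiag, hρ⟩ := ((eventually_all.2 fun i =>
    eventually_ge_atTop (-M₁ i i)).and h₂.eventually_spectralRadius_lt).exists
  have hN₀ : ∀ i j, 0 ≤ (M₁ + c • 1) i j := by
    intro i j
    by_cases h : i = j
    · subst h; simpa [neg_le_iff_add_nonneg'] using hdiag i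
    · simpa [Matrix.one_apply_ne h] using h₁ i j h
  have hN : ∀ i j, (M₁ + c • 1) i j ≤ (M₂ + c • 1) i j := fun i j => by simpa using hle i j
  intro z hz
  have hcz : (c : ℂ) + z ∈ spectrum ℂ ((M₁ + c • 1).map Complex.ofReal) := by
    rw [Matrix.map_ofReal_add_smul_one_s17, ← spectrum.singleton_add_eq]
    exact Set.add_mem_add rfl hz
  have hnorm : ‖(c : ℂ) + z‖ < c := by
    have hlt : (‖(c : ℂ) + z‖₊ : ENNReal) < ENNReal.ofReal c :=
      ((le_iSup₂ (α := ENNReal) _ hcz).trans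
        (Matrix.spectralRadius_map_ofReal_mono hN₀ hN)).trans_lt hρ
    exact (ENNReal.ofReal_lt_ofReal_iff_of_nonneg (norm_nonneg _)).1 (by rwa [ofReal_norm])
  have hre : c + z.re ≤ ‖(c : ℂ) + z‖ := by
    simpa using Complex.re_le_norm ((c : ℂ) + z)
  linarith

theorem IsHurwitz.smul {d : ℕ} {M : Matrix (Fin d) (Fin d) ℝ} (hM : IsHurwitz M) {θ : ℝ}
    (hθ : 0 < θ) : IsHurwitz (θ • M) := by
  intro z hz
  have hmap : (θ • M).map Complex.ofReal =
      Units.mk0 (θ : ℂ) (by exact_mod_cast hθ.ne') • M.map Complex.ofReal := by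
    ext i j
    simp [Units.smul_def]
  rw [hmap, spectrum.unit_smul_eq_smul] at hz
  obtain ⟨w, hw, rfl⟩ := hz
  simpa [Units.smul_def] using mul_neg_of_pos_of_neg hθ (hM w hw)

theorem neg_diagonal_smul_mul_add_smul {n V : Type*} [Fintype n] [DecidableEq n]
    [AddCommGroup V] [Module ℝ V] (E : Matrix n n ℝ) {C : V → Matrix n n ℝ}
    (hC : IsLinearMap ℝ C) (θ : ℝ) (ρ : n → ℝ) (σ : V) :
    -(diagonal (θ • ρ) * E) + C (θ • σ) = θ • (-(diagonal ρ * E) + C σ) := by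
  rw [hC.map_smul, diagonal_smul, smul_mul_assoc, smul_add, smul_neg]

theorem degradation_rescaling_lemma {d ncv : ℕ}
    (E : Matrix (Fin d) (Fin d) ℝ)
    (C : (Fin ncv → ℝ) → Matrix (Fin d) (Fin d) ℝ)
    (hC : IsLinearMap ℝ C)
    (A : (Fin d → ℝ) → (Fin ncv → ℝ) → Matrix (Fin d) (Fin d) ℝ)
    (hform : ∀ ρdg ρcv, A ρdg ρcv = -(Matrix.diagonal ρdg * E) + C ρcv)
    (hMetz : ∀ ρdg ρcv, (∀ i, 0 < ρdg i) → (∀ i, 0 < ρcv i) → IsMetzler (A ρdg ρcv))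
    (hmono : ∀ ρdg ρdg' ρcv, (∀ i, ρdg i ≤ ρdg' i) →
      ∀ m n, A ρdg' ρcv m n ≤ A ρdg ρcv m n) :
    (∀ ρdg ρcv, (∀ i, 0 < ρdg i) → (∀ i, 0 < ρcv i) → IsHurwitz (A ρdg ρcv)) ↔
      (∀ ρcv, (∀ i, 0 < ρcv i) → IsHurwitz (A (fun _ => 1) ρcv)) := by
  refine ⟨fun h ρcv hcv => h _ ρcv (fun _ => one_pos) hcv, fun h ρdg ρcv hdg hcv => ?_⟩
  obtain ⟨⟨θ, hθ⟩, hθle⟩ := Finite.exists_ge fun i => (⟨ρdg i, hdg i⟩ : Set.Ioi (0 : ℝ))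
  have hscale : A (fun _ => θ) ρcv = θ • A (fun _ => 1) (θ⁻¹ • ρcv) := by
    rw [hform, hform, ← neg_diagonal_smul_mul_add_smul E hC, smul_inv_smul₀ hθ.ne']
    congr
    ext
    simp
  have hθstable : IsHurwitz (A (fun _ => θ) ρcv) :=
    hscale ▸ (h _ fun i => mul_pos (inv_pos.2 hθ) (hcv i)).smul hθ
  exact (hMetz ρdg ρcv hdg hcv).isHurwitz_of_le (hmono _ _ ρcv hθle) hθstable
end
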